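/- arXiv:2205.14855 — 4 statements merged into one kernel-verified Lean document; each statement's English description precedes it below -/
import Mathlib

section
/- Suppose σ_r² − σ_{r+1}² − ‖(I − U_r U_rᵀ) y_n‖² > 0. Then for any choice of leading-r orthonormal left singular vectors Û_r of Ŷ, ‖Û_r Û_rᵀ − U_r U_rᵀ‖_F ≤ ( 2√2 σ_r ‖(I − U_r U_rᵀ) y_n‖ / (σ_r² − σ_{r+1}² − ‖(I − U_r U_rᵀ)y_n‖²) ) · √( Σ_{i=1}^{r} (u_iᵀ y_n / σ_i)² ). -/
open Matrix MeasureTheory ProbabilityTheory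
open scoped BigOperators ENNReal NNReal

noncomputable section

/-- Euclidean norm of a vector in `Fin p → ℝ`. -/
def vnorm {p : ℕ} (x : Fin p → ℝ) : ℝ := Real.sqrt (∑ i, (x i) ^ 2)

/-- Frobenius norm of a real matrix. -/
def fnorm {m n : ℕ} (A : Matrix (Fin m) (Fin n) ℝ) : ℝ :=
  Real.sqrt (∑ i, ∑ j, (A i j) ^ 2)

/-- Operator (spectral) norm of a real matrix. -/
def opnorm {m n : ℕ} (A : Matrix (Fin m) (Fin n) ℝ) : ℝ :=
  ‖LinearMap.toContinuousLinearMap (Matrix.toEuclideanLin A)‖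

/-- A (full) singular value decomposition of a real `p × n` matrix `A`:
`A = U D Vᵀ` with `U, V` orthogonal and `D` the rectangular diagonal matrix with the
nonincreasing nonnegative singular values `sv 0 ≥ sv 1 ≥ ⋯` on the diagonal
(0-indexed, so the math `σ_i` is `sv (i-1)`), extended by zero beyond `min p n`. -/
structure SVDData (p n : ℕ) (A : Matrix (Fin p) (Fin n) ℝ) where
  U : Matrix (Fin p) (Fin p) ℝ
  V : Matrix (Fin n) (Fin n) ℝ
  sv : ℕ → ℝ
  hU : Uᵀ * U = 1
  hV : Vᵀ * V = 1
  sv_anti : ∀ i j : ℕ, i ≤ j → sv j ≤ sv i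
  sv_nonneg : ∀ i, 0 ≤ sv i
  sv_zero : ∀ j, min p n ≤ j → sv j = 0
  decomp : A = U * (Matrix.of fun (i : Fin p) (j : Fin n) => if (i : ℕ) = (j : ℕ) then sv (i : ℕ) else 0) * Vᵀ

/-- Projection matrix `U_{1:r} U_{1:r}ᵀ` onto the span of the first `r` columns of `U`. -/
def projr {p : ℕ} (U : Matrix (Fin p) (Fin p) ℝ) (r : ℕ) : Matrix (Fin p) (Fin p) ℝ :=
  Matrix.of fun i j => ∑ l : Fin p, if (l : ℕ) < r then U i l * U j l else 0

/-- The `l`-th (0-indexed) column of a matrix, as a vector. -/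
def matCol {p q : ℕ} (U : Matrix (Fin p) (Fin q) ℝ) (l : ℕ) : Fin p → ℝ :=
  fun i => if h : l < q then U i ⟨l, h⟩ else 0

/-- `β` for a cluster assignment: `(k/n) ·` (size of the smallest cluster),
so that `β·n/k` is the size of the smallest cluster. -/
def betaMin (n k : ℕ) (z : Fin n → Fin k) : ℝ :=
  ((k : ℝ) / n) * ⨅ a : Fin k, ((Finset.univ.filter fun i => z i = a).card : ℝ)

/-- Minimum pairwise distance between the centers. -/
def Delta {p k : ℕ} (θ : Fin k → Fin p → ℝ) : ℝ :=
  ⨅ q : {q : Fin k × Fin k // q.1 ≠ q.2}, vnorm (fun i => θ q.1.1 i - θ q.1.2 i)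

/-- Misclustering error `ℓ(z, z*)`. -/
def miscl {n k : ℕ} (z zs : Fin n → Fin k) : ℝ :=
  (⨅ φ : Equiv.Perm (Fin k), ((Finset.univ.filter fun i => z i ≠ φ (zs i)).card : ℝ)) / n

/-- `(z, c)` is a global minimizer of the k-means objective for the columns of `W * X`. -/
def IsKMeans {p n k : ℕ} (W : Matrix (Fin p) (Fin p) ℝ) (X : Matrix (Fin p) (Fin n) ℝ)
    (z : Fin n → Fin k) (c : Fin k → Fin p → ℝ) : Prop :=
  ∀ (z' : Fin n → Fin k) (c' : Fin k → Fin p → ℝ),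
    ∑ i, ∑ a, (W.mulVec (fun b => X b i) a - c (z i) a) ^ 2 ≤
      ∑ i, ∑ a, (W.mulVec (fun b => X b i) a - c' (z' i) a) ^ 2


/-!
In the basis `U` of left singular vectors of `Y`, the identity `Ŷ Ŷᵀ = Y Yᵀ + y yᵀ` says that
the orthogonal matrix `K = Uᵀ Û` diagonalises the rank-one update `diag(σ²) + b bᵀ`, `b = Uᵀ y`,
with eigenvalues `σ̂²`; entrywise, `(σ_i² − σ̂_j²) K_ij = −b_i (Kᵀ b)_j`. Writing `γ` for
`‖(I − U_r U_rᵀ) y‖`, i.e. `γ² = ∑_{i > r} b_i²`, the Ky Fan inequality for `K` and for `Kᵀ`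
gives `∑_{j > r} (Kᵀ b)_j² ≤ γ²` and, comparing the bounds at `r` and `r + 1`,
`σ̂_{r+1}² ≤ σ_{r+1}² + γ²`. So for `i ≤ r < j` the factor `σ_i² − σ̂_j²` is at least
`δ_i = σ_i² − σ_{r+1}² − γ²`, whence `δ_i² ∑_{j > r} K_ij² ≤ b_i² γ²`, while
`‖Û_r Û_rᵀ − U_r U_rᵀ‖_F² = 2 ∑_{i ≤ r < j} K_ij²`. Finally `σ_i · gap ≤ 2 σ_r δ_i`.
-/

namespace SVDData

open Finset

variable {p n : ℕ} {A : Matrix (Fin p) (Fin n) ℝ}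

lemma mul_transpose_eq (D : SVDData p n A) :
    A * Aᵀ = D.U * diagonal (fun i : Fin p => D.sv i ^ 2) * D.Uᵀ := by
  set S : Matrix (Fin p) (Fin n) ℝ := of fun i j => if (i : ℕ) = (j : ℕ) then D.sv i else 0
  have hS : S * Sᵀ = diagonal (fun i : Fin p => D.sv i ^ 2) := by
    ext i k
    rw [mul_apply]
    by_cases hik : i = k
    · subst hik
      rw [diagonal_apply_eq]
      have h := Fin.sum_univ_eq_sum_range (fun j => if (i : ℕ) = j then D.sv i ^ 2 else 0) n
      simp only [sum_ite_eq, mem_range] at h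
      simp only [S, of_apply, transpose_apply, ← sq, ite_pow, zero_pow two_ne_zero, h]
      split_ifs with hin
      · rfl
      · rw [D.sv_zero _ ((min_le_right p n).trans (not_lt.mp hin)), zero_pow two_ne_zero]
    · rw [diagonal_apply_ne _ hik]
      refine sum_eq_zero fun j _ => ?_
      simp only [S, of_apply, transpose_apply]
      split_ifs with h1 h2 <;> first | exact absurd (Fin.ext (h1.trans h2.symm)) hik | simp
  have hA : A = D.U * S * D.Vᵀ := D.decomp
  calc A * Aᵀ = D.U * S * D.Vᵀ * (D.U * S * D.Vᵀ)ᵀ := by rw [← hA]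
    _ = D.U * (S * ((D.Vᵀ * D.V) * (Sᵀ * D.Uᵀ))) := by
        simp only [transpose_mul, transpose_transpose, Matrix.mul_assoc]
    _ = D.U * diagonal (fun i : Fin p => D.sv i ^ 2) * D.Uᵀ := by
        rw [D.hV, Matrix.one_mul, ← Matrix.mul_assoc S, hS, Matrix.mul_assoc]

end SVDData

namespace LeaveOneOut

open Finset

variable {p : ℕ}

lemma sum_filter_val_lt_eq_sum_range {M : Type*} [AddCommMonoid M] (f : ℕ → M) {r : ℕ}
    (hr : r ≤ p) : ∑ i : Fin p with i.val < r, f i = ∑ i ∈ range r, f i := by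
  rw [sum_filter, Fin.sum_univ_eq_sum_range (fun i => if i < r then f i else 0), ← sum_filter]
  congr 1
  ext i
  simp only [mem_filter, mem_range]
  omega

lemma sum_filter_val_lt_add_sum_filter_le (f : Fin p → ℝ) (r : ℕ) :
    ∑ i : Fin p with i.val < r, f i + ∑ i : Fin p with r ≤ i.val, f i = ∑ i, f i := by
  simpa only [not_lt] using sum_filter_add_sum_filter_not univ (fun i : Fin p => i.val < r) f

lemma antitone_sq {s : ℕ → ℝ} (hs : Antitone s) (hs0 : ∀ k, 0 ≤ s k) :
    Antitone fun k => s k ^ 2 :=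
  fun _ _ hkl => pow_le_pow_left₀ (hs0 _) (hs hkl) 2

section Orthogonal

variable {K : Matrix (Fin p) (Fin p) ℝ}

lemma orthogonal_transpose_mul {U V : Matrix (Fin p) (Fin p) ℝ} (hU : Uᵀ * U = 1)
    (hV : Vᵀ * V = 1) : (Uᵀ * V)ᵀ * (Uᵀ * V) = 1 := by
  rw [transpose_mul, transpose_transpose, Matrix.mul_assoc, ← Matrix.mul_assoc U,
    mul_eq_one_comm.mp hU, Matrix.one_mul, hV]

lemma orthogonal_transpose (hK : Kᵀ * K = 1) : Kᵀᵀ * Kᵀ = 1 := by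
  rw [transpose_transpose]
  exact mul_eq_one_comm.mp hK

lemma sum_sq_apply_left (hK : Kᵀ * K = 1) (j : Fin p) : ∑ i, K i j ^ 2 = 1 := by
  simpa [mul_apply, sq] using congr_fun₂ hK j j

lemma sum_sq_apply_right (hK : Kᵀ * K = 1) (i : Fin p) : ∑ j, K i j ^ 2 = 1 := by
  have hK' : K * Kᵀ = 1 := mul_eq_one_comm.mp hK
  simpa [mul_apply, sq] using congr_fun₂ hK' i i

lemma sum_sq_mulVec (hK : Kᵀ * K = 1) (x : Fin p → ℝ) :
    ∑ i, (K *ᵥ x) i ^ 2 = ∑ i, x i ^ 2 := by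
  have h : (K *ᵥ x) ⬝ᵥ (K *ᵥ x) = x ⬝ᵥ x := by
    rw [dotProduct_mulVec, ← mulVec_transpose, mulVec_mulVec, hK, one_mulVec, dotProduct_comm]
  simpa [dotProduct, sq] using h

lemma sum_mul_le_sum_filter_val_lt {μ : ℕ → ℝ} (hμ : Antitone μ) (r : ℕ) {c : Fin p → ℝ}
    (hc0 : ∀ j, 0 ≤ c j) (hc1 : ∀ j, c j ≤ 1) (hc : ∑ j, c j = #{j : Fin p | j.val < r}) :
    ∑ j : Fin p, μ j * c j ≤ ∑ j : Fin p with j.val < r, μ j := by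
  -- compare termwise with the supporting line through `μ r`
  have key : ∀ j : Fin p, μ j * c j ≤
      (if j.val < r then μ j else 0) + μ r * (c j - if j.val < r then 1 else 0) := by
    intro j
    split_ifs with hj
    · nlinarith [hμ hj.le, hc1 j]
    · nlinarith [hμ (not_lt.mp hj), hc0 j]
  calc ∑ j : Fin p, μ j * c j
      ≤ ∑ j : Fin p,
          ((if j.val < r then μ j else 0) + μ r * (c j - if j.val < r then 1 else 0)) :=
        sum_le_sum fun j _ => key j
    _ = ∑ j : Fin p with j.val < r, μ j := by
        rw [sum_add_distrib, ← mul_sum, sum_sub_distrib, hc, sum_boole, sub_self, mul_zero,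
          add_zero, sum_filter]

/-- Ky Fan's maximum principle, in the coordinates of an orthogonal change of basis `K`. -/
lemma sum_filter_val_lt_sum_mul_sq_le (hK : Kᵀ * K = 1) {μ : ℕ → ℝ} (hμ : Antitone μ)
    (r : ℕ) :
    ∑ i : Fin p with i.val < r, ∑ j : Fin p, μ j * K i j ^ 2 ≤
      ∑ j : Fin p with j.val < r, μ j := by
  rw [sum_comm]
  simp_rw [← mul_sum]
  refine sum_mul_le_sum_filter_val_lt hμ r (fun j => sum_nonneg fun i _ => sq_nonneg _)
    (fun j => ?_) ?_
  · rw [← sum_sq_apply_left hK j]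
    exact sum_le_sum_of_subset_of_nonneg (filter_subset _ _) fun i _ _ => sq_nonneg _
  · rw [sum_comm, card_eq_sum_ones, Nat.cast_sum, Nat.cast_one]
    exact sum_congr rfl fun i _ => sum_sq_apply_right hK i

end Orthogonal

lemma mul_le_two_mul_sq_sub_sq_add {σ s g : ℝ} (hσ : 0 < σ) (hσs : σ ≤ s) (hg : 0 < g)
    (hgσ : g ≤ σ ^ 2) : s * g ≤ 2 * σ * (s ^ 2 - σ ^ 2 + g) := by
  rcases le_total s (2 * σ) with h | h
  · nlinarith [mul_nonneg hg.le (sub_nonneg.mpr h),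
      mul_nonneg (mul_nonneg hσ.le (sub_nonneg.mpr hσs)) (by linarith : (0:ℝ) ≤ s + σ)]
  · nlinarith [mul_le_mul_of_nonneg_right hgσ (sub_nonneg.mpr h), mul_pos hσ (hσ.trans_le hσs)]

lemma le_of_sq_sub_sq_add_sq_mul_le {σ s g β γ T : ℝ} (hσ : 0 < σ) (hσs : σ ≤ s)
    (hg : 0 < g) (hgσ : g ≤ σ ^ 2) (hT : (s ^ 2 - σ ^ 2 + g) ^ 2 * T ≤ β ^ 2 * γ ^ 2) :
    T ≤ (2 * σ * γ / g) ^ 2 * (β / s) ^ 2 := by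
  have hs : 0 < s := hσ.trans_le hσs
  have hδ : 0 < s ^ 2 - σ ^ 2 + g := by nlinarith
  have hsq : (s * g) ^ 2 ≤ (2 * σ * (s ^ 2 - σ ^ 2 + g)) ^ 2 :=
    pow_le_pow_left₀ (by positivity) (mul_le_two_mul_sq_sub_sq_add hσ hσs hg hgσ) 2
  rw [div_pow, div_pow, div_mul_div_comm, le_div_iff₀ (by positivity)]
  refine le_of_mul_le_mul_left ?_ (pow_pos hδ 2)
  calc (s ^ 2 - σ ^ 2 + g) ^ 2 * (T * (g ^ 2 * s ^ 2))
      = (s * g) ^ 2 * ((s ^ 2 - σ ^ 2 + g) ^ 2 * T) := by ring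
    _ ≤ (s * g) ^ 2 * (β ^ 2 * γ ^ 2) := mul_le_mul_of_nonneg_left hT (sq_nonneg _)
    _ ≤ (2 * σ * (s ^ 2 - σ ^ 2 + g)) ^ 2 * (β ^ 2 * γ ^ 2) :=
        mul_le_mul_of_nonneg_right hsq (by positivity)
    _ = (s ^ 2 - σ ^ 2 + g) ^ 2 * ((2 * σ * γ) ^ 2 * β ^ 2) := by ring

section RankOneUpdate

variable {K : Matrix (Fin p) (Fin p) ℝ} {ν μ : ℕ → ℝ} {b : Fin p → ℝ}

lemma apply_mul_eq_of_diagonal_add_vecMulVec (hK : Kᵀ * K = 1)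
    (hG : diagonal (fun i : Fin p => ν i) + vecMulVec b b =
      K * diagonal (fun j : Fin p => μ j) * Kᵀ)
    (i j : Fin p) : K i j * μ j = ν i * K i j + b i * (Kᵀ *ᵥ b) j := by
  have h : (diagonal (fun i : Fin p => ν i) + vecMulVec b b) * K =
      K * diagonal (fun j : Fin p => μ j) := by
    rw [hG, Matrix.mul_assoc, hK, Matrix.mul_one]
  have hij := congr_fun₂ h i j
  rw [add_mul, vecMulVec_mul, Matrix.add_apply, diagonal_mul, mul_diagonal,
    vecMulVec_apply] at hij
  rw [← vecMul_transpose, transpose_transpose, hij]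

lemma sum_mul_sq_apply_right (hK : Kᵀ * K = 1)
    (hG : diagonal (fun i : Fin p => ν i) + vecMulVec b b =
      K * diagonal (fun j : Fin p => μ j) * Kᵀ)
    (i : Fin p) : ∑ j : Fin p, μ j * K i j ^ 2 = ν i + b i ^ 2 := by
  have hb : ∑ j, K i j * (Kᵀ *ᵥ b) j = b i := by
    change (K *ᵥ (Kᵀ *ᵥ b)) i = b i
    rw [mulVec_mulVec, mul_eq_one_comm.mp hK, one_mulVec]
  calc ∑ j : Fin p, μ j * K i j ^ 2 = ∑ j, (ν i * K i j + b i * (Kᵀ *ᵥ b) j) * K i j :=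
        sum_congr rfl fun j _ => by rw [← apply_mul_eq_of_diagonal_add_vecMulVec hK hG]; ring
    _ = ν i * ∑ j, K i j ^ 2 + b i * ∑ j, K i j * (Kᵀ *ᵥ b) j := by
        simp only [add_mul, sum_add_distrib, mul_sum]
        congr 1 <;> exact sum_congr rfl fun j _ => by ring
    _ = ν i + b i ^ 2 := by rw [sum_sq_apply_right hK, hb]; ring

lemma sum_mul_sq_apply_left (hK : Kᵀ * K = 1)
    (hG : diagonal (fun i : Fin p => ν i) + vecMulVec b b =
      K * diagonal (fun j : Fin p => μ j) * Kᵀ)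
    (j : Fin p) : ∑ i : Fin p, ν i * K i j ^ 2 = μ j - (Kᵀ *ᵥ b) j ^ 2 := by
  have ha : ∑ i, K i j * b i = (Kᵀ *ᵥ b) j := rfl
  calc ∑ i : Fin p, ν i * K i j ^ 2 = ∑ i, (K i j * μ j - b i * (Kᵀ *ᵥ b) j) * K i j :=
        sum_congr rfl fun i _ => by rw [apply_mul_eq_of_diagonal_add_vecMulVec hK hG]; ring
    _ = μ j * ∑ i, K i j ^ 2 - (Kᵀ *ᵥ b) j * ∑ i, K i j * b i := by
        simp only [sub_mul, sum_sub_distrib, mul_sum]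
        congr 1 <;> exact sum_congr rfl fun i _ => by ring
    _ = μ j - (Kᵀ *ᵥ b) j ^ 2 := by rw [sum_sq_apply_left hK, ha]; ring

lemma sum_head_add_sum_head_sq_le (hK : Kᵀ * K = 1)
    (hG : diagonal (fun i : Fin p => ν i) + vecMulVec b b =
      K * diagonal (fun j : Fin p => μ j) * Kᵀ)
    (hμ : Antitone μ) (r : ℕ) :
    ∑ i : Fin p with i.val < r, ν i + ∑ i : Fin p with i.val < r, b i ^ 2 ≤
      ∑ j : Fin p with j.val < r, μ j := by
  rw [← sum_add_distrib]
  simpa only [sum_mul_sq_apply_right hK hG] using sum_filter_val_lt_sum_mul_sq_le hK hμ r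

lemma sum_head_le_add_sum_head_sq (hK : Kᵀ * K = 1)
    (hG : diagonal (fun i : Fin p => ν i) + vecMulVec b b =
      K * diagonal (fun j : Fin p => μ j) * Kᵀ)
    (hν : Antitone ν) (r : ℕ) :
    ∑ j : Fin p with j.val < r, μ j ≤
      ∑ i : Fin p with i.val < r, ν i + ∑ j : Fin p with j.val < r, (Kᵀ *ᵥ b) j ^ 2 := by
  have h := sum_filter_val_lt_sum_mul_sq_le (orthogonal_transpose hK) hν r
  simp only [transpose_apply, sum_mul_sq_apply_left hK hG, sum_sub_distrib] at h
  linarith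

lemma sum_tail_sq_mulVec_transpose_le (hK : Kᵀ * K = 1)
    (hG : diagonal (fun i : Fin p => ν i) + vecMulVec b b =
      K * diagonal (fun j : Fin p => μ j) * Kᵀ)
    (hν : Antitone ν) (hμ : Antitone μ) (r : ℕ) :
    ∑ j : Fin p with r ≤ j.val, (Kᵀ *ᵥ b) j ^ 2 ≤
      ∑ i : Fin p with r ≤ i.val, b i ^ 2 := by
  have hnorm : ∑ j, (Kᵀ *ᵥ b) j ^ 2 = ∑ i, b i ^ 2 :=
    sum_sq_mulVec (orthogonal_transpose hK) b
  rw [← sum_filter_val_lt_add_sum_filter_le _ r,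
    ← sum_filter_val_lt_add_sum_filter_le _ r] at hnorm
  linarith [sum_head_add_sum_head_sq_le hK hG hμ r, sum_head_le_add_sum_head_sq hK hG hν r]

/-- A Weyl-type bound, read off from the Ky Fan inequalities at `r` and `r + 1`. -/
lemma le_add_sum_tail_sq (hK : Kᵀ * K = 1)
    (hG : diagonal (fun i : Fin p => ν i) + vecMulVec b b =
      K * diagonal (fun j : Fin p => μ j) * Kᵀ)
    (hν : Antitone ν) (hμ : Antitone μ) {r : ℕ} (hr : r < p) :
    μ r ≤ ν r + ∑ i : Fin p with r ≤ i.val, b i ^ 2 := by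
  have hhead := sum_head_add_sum_head_sq_le hK hG hμ r
  have hsucc := sum_head_le_add_sum_head_sq hK hG hν (r + 1)
  rw [sum_filter_val_lt_eq_sum_range μ hr.le, sum_filter_val_lt_eq_sum_range ν hr.le] at hhead
  rw [sum_filter_val_lt_eq_sum_range μ hr, sum_filter_val_lt_eq_sum_range ν hr,
    sum_range_succ, sum_range_succ] at hsucc
  have hnorm : ∑ j, (Kᵀ *ᵥ b) j ^ 2 = ∑ i, b i ^ 2 :=
    sum_sq_mulVec (orthogonal_transpose hK) b
  have hsub : ∑ j : Fin p with j.val < r + 1, (Kᵀ *ᵥ b) j ^ 2 ≤ ∑ j, (Kᵀ *ᵥ b) j ^ 2 :=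
    sum_le_sum_of_subset_of_nonneg (filter_subset _ _) fun _ _ _ => sq_nonneg _
  linarith [sum_filter_val_lt_add_sum_filter_le (fun i => b i ^ 2) r]

lemma sq_mul_sum_tail_sq_le (hK : Kᵀ * K = 1)
    (hG : diagonal (fun i : Fin p => ν i) + vecMulVec b b =
      K * diagonal (fun j : Fin p => μ j) * Kᵀ)
    (hν : Antitone ν) (hμ : Antitone μ) {r : ℕ} {i : Fin p} {δ : ℝ} (hδ : 0 ≤ δ)
    (hδi : δ ≤ ν i - ν r - ∑ k : Fin p with r ≤ k.val, b k ^ 2) :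
    δ ^ 2 * ∑ j : Fin p with r ≤ j.val, K i j ^ 2 ≤
      b i ^ 2 * ∑ k : Fin p with r ≤ k.val, b k ^ 2 := by
  have hentry : ∀ j : Fin p, r ≤ j.val →
      δ ^ 2 * K i j ^ 2 ≤ b i ^ 2 * (Kᵀ *ᵥ b) j ^ 2 := by
    intro j hj
    have hμj : μ j ≤ ν r + ∑ k : Fin p with r ≤ k.val, b k ^ 2 :=
      (hμ hj).trans (le_add_sum_tail_sq hK hG hν hμ (hj.trans_lt j.isLt))
    have hsep : δ ^ 2 ≤ (ν i - μ j) ^ 2 := pow_le_pow_left₀ hδ (by linarith) 2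
    have hrel := apply_mul_eq_of_diagonal_add_vecMulVec hK hG i j
    calc δ ^ 2 * K i j ^ 2 ≤ (ν i - μ j) ^ 2 * K i j ^ 2 :=
          mul_le_mul_of_nonneg_right hsep (sq_nonneg _)
      _ = b i ^ 2 * (Kᵀ *ᵥ b) j ^ 2 := by
          rw [← mul_pow, ← mul_pow, show (ν i - μ j) * K i j = -(b i * (Kᵀ *ᵥ b) j) by
            rw [sub_mul]; linarith, neg_sq]
  calc δ ^ 2 * ∑ j : Fin p with r ≤ j.val, K i j ^ 2
      ≤ ∑ j : Fin p with r ≤ j.val, b i ^ 2 * (Kᵀ *ᵥ b) j ^ 2 := by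
        rw [mul_sum]
        exact sum_le_sum fun j hj => hentry j (mem_filter.mp hj).2
    _ ≤ b i ^ 2 * ∑ k : Fin p with r ≤ k.val, b k ^ 2 := by
        rw [← mul_sum]
        exact mul_le_mul_of_nonneg_left (sum_tail_sq_mulVec_transpose_le hK hG hν hμ r)
          (sq_nonneg _)

lemma sum_tail_sq_le_of_gap {s : ℕ → ℝ} (hK : Kᵀ * K = 1)
    (hG : diagonal (fun i : Fin p => s i ^ 2) + vecMulVec b b =
      K * diagonal (fun j : Fin p => μ j) * Kᵀ)
    (hs : Antitone s) (hs0 : ∀ k, 0 ≤ s k) (hμ : Antitone μ) {r : ℕ} {γ : ℝ}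
    (hγ : γ ^ 2 = ∑ k : Fin p with r ≤ k.val, b k ^ 2)
    (hgap : 0 < s (r - 1) ^ 2 - s r ^ 2 - γ ^ 2) {i : Fin p} (hi : i.val < r) :
    ∑ j : Fin p with r ≤ j.val, K i j ^ 2 ≤
      (2 * s (r - 1) * γ / (s (r - 1) ^ 2 - s r ^ 2 - γ ^ 2)) ^ 2 * (b i / s i) ^ 2 := by
  have hgapσ : s (r - 1) ^ 2 - s r ^ 2 - γ ^ 2 ≤ s (r - 1) ^ 2 := by
    linarith [sq_nonneg (s r), sq_nonneg γ]
  have hσ : 0 < s (r - 1) :=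
    lt_of_le_of_ne (hs0 _) fun h => by nlinarith [h ▸ hgapσ]
  have hσi : s (r - 1) ≤ s i := hs (by omega)
  refine le_of_sq_sub_sq_add_sq_mul_le hσ hσi hgap hgapσ ?_
  rw [hγ]
  exact sq_mul_sum_tail_sq_le hK hG (antitone_sq hs hs0) hμ (by nlinarith)
    (by rw [← hγ]; linarith)

end RankOneUpdate

lemma projr_eq_mul_diagonal_mul (U : Matrix (Fin p) (Fin p) ℝ) (r : ℕ) :
    projr U r = U * diagonal (fun l : Fin p => if l.val < r then 1 else 0) * Uᵀ := by
  ext i j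
  rw [mul_apply]
  simp only [projr, of_apply, mul_diagonal, transpose_apply]
  exact sum_congr rfl fun l _ => by split_ifs <;> ring

lemma transpose_projr (U : Matrix (Fin p) (Fin p) ℝ) (r : ℕ) : (projr U r)ᵀ = projr U r := by
  ext i j
  simp only [projr, transpose_apply, of_apply, mul_comm]

lemma trace_conj_diagonal_mul_conj_diagonal (U V : Matrix (Fin p) (Fin p) ℝ)
    (α β : Fin p → ℝ) :
    trace (U * diagonal α * Uᵀ * (V * diagonal β * Vᵀ)) =
      ∑ i, ∑ j, α i * β j * (Uᵀ * V) i j ^ 2 := by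
  have hcyc : trace (U * diagonal α * Uᵀ * (V * diagonal β * Vᵀ)) =
      trace (diagonal α * (Uᵀ * V) * diagonal β * (Uᵀ * V)ᵀ) := by
    rw [Matrix.mul_assoc, Matrix.mul_assoc, trace_mul_comm]
    simp only [transpose_mul, transpose_transpose, Matrix.mul_assoc]
  rw [hcyc, trace]
  refine sum_congr rfl fun i _ => ?_
  rw [Matrix.diag_apply, mul_apply]
  refine sum_congr rfl fun j _ => ?_
  rw [mul_diagonal, diagonal_mul, transpose_apply]
  ring

lemma trace_projr_mul_projr (U V : Matrix (Fin p) (Fin p) ℝ) (r : ℕ) :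
    trace (projr U r * projr V r) =
      ∑ i : Fin p with i.val < r, ∑ j : Fin p with j.val < r, (Uᵀ * V) i j ^ 2 := by
  rw [projr_eq_mul_diagonal_mul, projr_eq_mul_diagonal_mul,
    trace_conj_diagonal_mul_conj_diagonal, sum_filter]
  refine sum_congr rfl fun i _ => ?_
  rw [sum_filter]
  split_ifs <;> simp

lemma trace_projr_mul_self {U : Matrix (Fin p) (Fin p) ℝ} (hU : Uᵀ * U = 1) (r : ℕ) :
    trace (projr U r * projr U r) = #{i : Fin p | i.val < r} := by
  rw [trace_projr_mul_projr, hU, card_eq_sum_ones, Nat.cast_sum, Nat.cast_one]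
  refine sum_congr rfl fun i hi => ?_
  rw [sum_eq_single_of_mem i hi fun j _ hji => by simp [one_apply_ne' hji]]
  simp

lemma sum_sq_projr_sub_projr {U V : Matrix (Fin p) (Fin p) ℝ} (hU : Uᵀ * U = 1)
    (hV : Vᵀ * V = 1) (r : ℕ) :
    ∑ a, ∑ b, (projr V r - projr U r) a b ^ 2 =
      2 * ∑ i : Fin p with i.val < r, ∑ j : Fin p with r ≤ j.val, (Uᵀ * V) i j ^ 2 := by
  have htrace : ∑ a, ∑ b, (projr V r - projr U r) a b ^ 2 =
      trace ((projr V r - projr U r) * (projr V r - projr U r)ᵀ) := by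
    simp only [trace, Matrix.diag_apply, mul_apply, transpose_apply, sq]
  have hhead : (#{i : Fin p | i.val < r} : ℝ) =
      ∑ i : Fin p with i.val < r, ∑ j, (Uᵀ * V) i j ^ 2 := by
    simp only [sum_sq_apply_right (orthogonal_transpose_mul hU hV), sum_const, nsmul_eq_mul,
      mul_one]
  rw [htrace, transpose_sub, transpose_projr, transpose_projr, sub_mul, mul_sub, mul_sub,
    trace_sub, trace_sub, trace_sub, trace_mul_comm (projr V r) (projr U r),
    trace_projr_mul_self hU, trace_projr_mul_self hV, trace_projr_mul_projr, hhead]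
  simp only [← sum_filter_val_lt_add_sum_filter_le _ r, sum_add_distrib]
  ring

lemma vnorm_sq (x : Fin p → ℝ) : vnorm x ^ 2 = ∑ i, x i ^ 2 :=
  Real.sq_sqrt (sum_nonneg fun _ _ => sq_nonneg _)

lemma vnorm_sub_projr_mulVec_sq {U : Matrix (Fin p) (Fin p) ℝ} (hU : Uᵀ * U = 1) (r : ℕ)
    (y : Fin p → ℝ) :
    vnorm (y - projr U r *ᵥ y) ^ 2 = ∑ i : Fin p with r ≤ i.val, (Uᵀ *ᵥ y) i ^ 2 := by
  have hcoord : Uᵀ *ᵥ (y - projr U r *ᵥ y) =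
      fun i => if i.val < r then 0 else (Uᵀ *ᵥ y) i := by
    rw [mulVec_sub, projr_eq_mul_diagonal_mul, mulVec_mulVec, ← Matrix.mul_assoc,
      ← Matrix.mul_assoc, hU, Matrix.one_mul, ← mulVec_mulVec]
    ext i
    rw [Pi.sub_apply, mulVec_diagonal]
    split_ifs <;> simp
  rw [vnorm_sq, ← sum_sq_mulVec (orthogonal_transpose hU), hcoord, sum_filter]
  exact sum_congr rfl fun i _ => by split_ifs <;> simp_all

lemma sum_matCol_mul (U : Matrix (Fin p) (Fin p) ℝ) (y : Fin p → ℝ) (i : Fin p) :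
    ∑ j, matCol U i j * y j = (Uᵀ *ᵥ y) i := by
  simp [matCol, mulVec, dotProduct]

section LeaveOneOutColumn

variable {n : ℕ} {Yhat : Matrix (Fin p) (Fin (n + 1)) ℝ} {Y : Matrix (Fin p) (Fin n) ℝ}
  {y : Fin p → ℝ}

lemma mul_transpose_eq_add_vecMulVec (hY : ∀ i j, Y i j = Yhat i (Fin.castSucc j))
    (hy : ∀ i, y i = Yhat i (Fin.last n)) :
    Yhat * Yhatᵀ = Y * Yᵀ + vecMulVec y y := by
  ext i k
  simp only [mul_apply, Matrix.add_apply, transpose_apply, vecMulVec_apply,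
    Fin.sum_univ_castSucc, hY, hy]

lemma diagonal_add_vecMulVec_eq (hY : ∀ i j, Y i j = Yhat i (Fin.castSucc j))
    (hy : ∀ i, y i = Yhat i (Fin.last n)) (D : SVDData p n Y) (Dh : SVDData p (n + 1) Yhat) :
    diagonal (fun i : Fin p => D.sv i ^ 2) + vecMulVec (D.Uᵀ *ᵥ y) (D.Uᵀ *ᵥ y) =
      D.Uᵀ * Dh.U * diagonal (fun j : Fin p => Dh.sv j ^ 2) * (D.Uᵀ * Dh.U)ᵀ := by
  have hvec : y ᵥ* D.U = D.Uᵀ *ᵥ y := by rw [← vecMul_transpose, transpose_transpose]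
  have hconj : D.Uᵀ * (D.U * diagonal (fun i : Fin p => D.sv i ^ 2) * D.Uᵀ) * D.U =
      D.Uᵀ * D.U * diagonal (fun i : Fin p => D.sv i ^ 2) * (D.Uᵀ * D.U) := by
    simp only [Matrix.mul_assoc]
  calc diagonal (fun i : Fin p => D.sv i ^ 2) + vecMulVec (D.Uᵀ *ᵥ y) (D.Uᵀ *ᵥ y)
      = D.Uᵀ * (Y * Yᵀ + vecMulVec y y) * D.U := by
        rw [D.mul_transpose_eq, Matrix.mul_add, Matrix.add_mul, mul_vecMulVec, vecMulVec_mul,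
          hvec, hconj, D.hU, Matrix.one_mul, Matrix.mul_one]
    _ = D.Uᵀ * Dh.U * diagonal (fun j : Fin p => Dh.sv j ^ 2) * (D.Uᵀ * Dh.U)ᵀ := by
        rw [← mul_transpose_eq_add_vecMulVec hY hy, Dh.mul_transpose_eq]
        simp only [transpose_mul, transpose_transpose, Matrix.mul_assoc]

end LeaveOneOutColumn

end LeaveOneOut

open LeaveOneOut Finset

theorem leave_one_out_perturbation_weak_gap_general
    (p n : ℕ) (Yhat : Matrix (Fin p) (Fin (n + 1)) ℝ)
    (Y : Matrix (Fin p) (Fin n) ℝ) (y : Fin p → ℝ)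
    (hY : ∀ i j, Y i j = Yhat i (Fin.castSucc j))
    (hy : ∀ i, y i = Yhat i (Fin.last n))
    (r : ℕ) (hr : r ≤ min p n)
    (D : SVDData p n Y) (Dh : SVDData p (n + 1) Yhat)
    (hgap : 0 <
      D.sv (r - 1) ^ 2 - D.sv r ^ 2 - vnorm (y - (projr D.U r).mulVec y) ^ 2) :
    fnorm (projr Dh.U r - projr D.U r) ≤
      2 * Real.sqrt 2 * D.sv (r - 1) * vnorm (y - (projr D.U r).mulVec y) /
        (D.sv (r - 1) ^ 2 - D.sv r ^ 2 - vnorm (y - (projr D.U r).mulVec y) ^ 2) *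
        Real.sqrt (∑ l ∈ Finset.range r, ((∑ j, matCol D.U l j * y j) / D.sv l) ^ 2) := by
  set σ := D.sv (r - 1)
  set γ := vnorm (y - (projr D.U r).mulVec y)
  set gap := σ ^ 2 - D.sv r ^ 2 - γ ^ 2
  set K := D.Uᵀ * Dh.U
  set b := D.Uᵀ *ᵥ y
  have hrow : ∀ i : Fin p, i.val < r →
      ∑ j : Fin p with r ≤ j.val, K i j ^ 2 ≤ (2 * σ * γ / gap) ^ 2 * (b i / D.sv i) ^ 2 :=
    fun i hi => sum_tail_sq_le_of_gap (μ := fun j => Dh.sv j ^ 2)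
      (orthogonal_transpose_mul D.hU Dh.hU) (diagonal_add_vecMulVec_eq hY hy D Dh) D.sv_anti
      D.sv_nonneg (antitone_sq Dh.sv_anti Dh.sv_nonneg) (vnorm_sub_projr_mulVec_sq D.hU r y) hgap hi
  have hsum : ∑ l ∈ range r, ((∑ j, matCol D.U l j * y j) / D.sv l) ^ 2 =
      ∑ i : Fin p with i.val < r, (b i / D.sv i) ^ 2 := by
    rw [← sum_filter_val_lt_eq_sum_range _ (hr.trans (min_le_left p n))]
    simp only [sum_matCol_mul, b]
  have hC : 0 ≤ 2 * σ * γ / gap := by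
    have := D.sv_nonneg (r - 1)
    have : 0 ≤ γ := Real.sqrt_nonneg _
    positivity
  calc fnorm (projr Dh.U r - projr D.U r)
      = √(2 * ∑ i : Fin p with i.val < r, ∑ j : Fin p with r ≤ j.val, K i j ^ 2) := by
        rw [fnorm, sum_sq_projr_sub_projr D.hU Dh.hU]
    _ ≤ √(2 * ∑ i : Fin p with i.val < r, (2 * σ * γ / gap) ^ 2 * (b i / D.sv i) ^ 2) :=
        Real.sqrt_le_sqrt (mul_le_mul_of_nonneg_left
          (sum_le_sum fun i hi => hrow i (mem_filter.mp hi).2) zero_le_two)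
    _ = 2 * √2 * σ * γ / gap *
          √(∑ l ∈ range r, ((∑ j, matCol D.U l j * y j) / D.sv l) ^ 2) := by
        rw [hsum, ← mul_sum, ← mul_assoc, Real.sqrt_mul (by positivity),
          Real.sqrt_mul zero_le_two, Real.sqrt_sq hC]
        ring

/-- **Theorem 6 (leave-one-out singular subspace perturbation, weak gap condition).**
If `σ_r² − σ_{r+1}² − ‖(I − U_r U_rᵀ) y‖² > 0`, then for any choice of leading-`r`
orthonormal left singular vectors `Û_r` of `Ŷ`,
`‖Û_r Û_rᵀ − U_r U_rᵀ‖_F ≤ (2√2 σ_r ‖(I − U_r U_rᵀ) y‖ /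
  (σ_r² − σ_{r+1}² − ‖(I − U_r U_rᵀ) y‖²)) √(Σ_{i=1}^r (u_iᵀ y/σ_i)²)`. -/
theorem leave_one_out_perturbation_weak_gap
    (p n : ℕ) (Yhat : Matrix (Fin p) (Fin (n + 1)) ℝ)
    (Y : Matrix (Fin p) (Fin n) ℝ) (y : Fin p → ℝ)
    (hY : ∀ i j, Y i j = Yhat i (Fin.castSucc j))
    (hy : ∀ i, y i = Yhat i (Fin.last n))
    (r : ℕ) (hr0 : 0 < r) (hr : r ≤ min p n)
    (D : SVDData p n Y) (Dh : SVDData p (n + 1) Yhat)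
    (hgap : 0 <
      D.sv (r - 1) ^ 2 - D.sv r ^ 2 - vnorm (y - (projr D.U r).mulVec y) ^ 2) :
    fnorm (projr Dh.U r - projr D.U r) ≤
      2 * Real.sqrt 2 * D.sv (r - 1) * vnorm (y - (projr D.U r).mulVec y) /
        (D.sv (r - 1) ^ 2 - D.sv r ^ 2 - vnorm (y - (projr D.U r).mulVec y) ^ 2) *
        Real.sqrt (∑ l ∈ Finset.range r, ((∑ j, matCol D.U l j * y j) / D.sv l) ^ 2) :=
  leave_one_out_perturbation_weak_gap_general p n Yhat Y y hY hy r hr D Dh hgap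
end
end

section
/- Assume ψ₀ := Δ/(β^{−1/2} k n^{−1/2} ‖E‖) ≥ 16 and κ ≤ r ≤ k, and let ẑ be the spectral clustering with r components and φ the bijection of [k] with ℓ(ẑ,z*) = (1/n)|{i : ẑ_i ≠ φ(z*_i)}|. Then there is a universal constant C > 0 (one may take C = 512) such that for every i ∈ [n]: 𝟙{ẑ_i ≠ φ(z*_i)} ≤ 𝟙{ (1 − C ψ₀^{−1}) Δ ≤ 2‖Û_{1:r} Û_{1:r}ᵀ ε_i‖ }. -/
open Matrix MeasureTheory ProbabilityTheory
open scoped BigOperators ENNReal NNReal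

noncomputable section

/-!
Write `W = Û_{1:r} Û_{1:r}ᵀ` and `d = β^{-1/2} k n^{-1/2} ‖E‖`, so that `ψ₀ = Δ / d` and
`k ‖E‖² = d² m` with `m` the size of the smallest cluster. Since `rank P ≤ r`, Weyl's inequality
gives `σ_{r+1}(X) ≤ ‖E‖`, hence `‖(I - W) P‖ ≤ 2 ‖E‖`; as the column `(I - W) θ_a` is repeated at
least `m` times in `(I - W) P`, every projected centre `W θ_a` lies within `2d` of `θ_a`.
The k-means cost of `(ẑ, c)` is at most that of `(z*, W θ)`, namely `∑ⱼ ‖W εⱼ‖² ≤ r ‖E‖² ≤ d² m`,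
so fewer than `m / 2` points have `‖W Xⱼ - c_{ẑⱼ}‖ > 2d` or `‖W εⱼ‖ > 2d`. Each cluster thus
contains a good point; these match the fitted centres to the true ones through a permutation `σ`
with `‖c_{σ a} - θ_a‖ ≤ 6d` which labels every good point correctly, so that `σ = φ`. Finally,
if `ẑᵢ ≠ φ(z*ᵢ)`, optimality of `c_{ẑᵢ}` for `W Xᵢ` and the triangle inequality give
`Δ ≤ 2 ‖W εᵢ‖ + 16 d`, which is the claim with `C = 16`.
-/

open Finset
open scoped Matrix.Norms.L2Operator

theorem opnorm_eq_norm {m n : ℕ} (A : Matrix (Fin m) (Fin n) ℝ) : opnorm A = ‖A‖ := rfl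

theorem vnorm_eq_norm_toLp {p : ℕ} (x : Fin p → ℝ) : vnorm x = ‖WithLp.toLp 2 x‖ := by
  rw [EuclideanSpace.norm_eq]; simp [vnorm]

theorem vnorm_nonneg {p : ℕ} (x : Fin p → ℝ) : 0 ≤ vnorm x := Real.sqrt_nonneg _

theorem vnorm_sq {p : ℕ} (x : Fin p → ℝ) : vnorm x ^ 2 = ∑ i, x i ^ 2 :=
  Real.sq_sqrt (by positivity)

theorem dist_toLp_eq_vnorm {p : ℕ} (x y : Fin p → ℝ) :
    dist (WithLp.toLp 2 x : EuclideanSpace ℝ (Fin p)) (WithLp.toLp 2 y) = vnorm (x - y) := by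
  rw [dist_eq_norm, ← WithLp.toLp_sub, vnorm_eq_norm_toLp]

theorem vnorm_pos {p : ℕ} {x : Fin p → ℝ} (hx : x ≠ 0) : 0 < vnorm x := by
  rw [vnorm_eq_norm_toLp, norm_pos_iff]
  exact fun h => hx (congrArg WithLp.ofLp h)

theorem vnorm_mulVec_le {m n : ℕ} (A : Matrix (Fin m) (Fin n) ℝ) (x : Fin n → ℝ) :
    vnorm (A *ᵥ x) ≤ ‖A‖ * vnorm x := by
  rw [vnorm_eq_norm_toLp, vnorm_eq_norm_toLp]
  exact A.l2_opNorm_mulVec _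

theorem mul_vnorm_le_vnorm_diagonal_mulVec {n : ℕ} {s : Fin n → ℝ} {b : ℝ} (hb : 0 ≤ b)
    (hs : ∀ i, b ≤ |s i|) (x : Fin n → ℝ) : b * vnorm x ≤ vnorm (diagonal s *ᵥ x) := by
  refine (pow_le_pow_iff_left₀ (by have := vnorm_nonneg x; positivity) (vnorm_nonneg _)
    two_ne_zero).1 ?_
  rw [mul_pow, vnorm_sq, vnorm_sq, mul_sum]
  refine sum_le_sum fun i _ => ?_
  rw [mulVec_diagonal, mul_pow]
  exact mul_le_mul_of_nonneg_right (sq_le_sq.2 (by rw [abs_of_nonneg hb]; exact hs i))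
    (sq_nonneg _)

namespace Matrix

theorem exists_mulVec_eq_zero_of_rank_lt {K m n : Type*} [Field K] [Fintype n]
    (A : Matrix m n K) (h : A.rank < Fintype.card n) : ∃ c ≠ 0, A *ᵥ c = 0 := by
  by_contra! hc
  have hinj : Function.Injective A.mulVecLin :=
    LinearMap.ker_eq_bot.1 <| LinearMap.ker_eq_bot'.2 fun c h0 => by_contra fun hne => hc c hne h0
  have := LinearMap.finrank_range_of_inj hinj
  rw [Module.finrank_fintype_fun_eq_card] at this
  exact h.ne this

variable {m n : Type*} [Fintype m] [Fintype n] [DecidableEq n]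

theorem l2_opNorm_transpose [DecidableEq m] (A : Matrix m n ℝ) : ‖Aᵀ‖ = ‖A‖ := by
  rw [← conjTranspose_eq_transpose_of_trivial, l2_opNorm_conjTranspose]

theorem l2_opNorm_diagonal_le {s : n → ℝ} {b : ℝ} (hb : 0 ≤ b) (hs : ∀ i, |s i| ≤ b) :
    ‖diagonal s‖ ≤ b := by
  rw [l2_opNorm_diagonal]
  exact (pi_norm_le_iff_of_nonneg hb).2 hs

theorem l2_opNorm_le_one_of_transpose_mul_self {U : Matrix m n ℝ} (hU : Uᵀ * U = 1) :
    ‖U‖ ≤ 1 := by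
  have h := l2_opNorm_conjTranspose_mul_self U
  rw [conjTranspose_eq_transpose_of_trivial, hU, ← diagonal_one] at h
  have h1 : ‖(diagonal fun _ => 1 : Matrix n n ℝ)‖ ≤ 1 :=
    l2_opNorm_diagonal_le zero_le_one (by simp)
  nlinarith [norm_nonneg U]

theorem l2_opNorm_mul_le_one {l : Type*} [Fintype l] [DecidableEq m] {A : Matrix l m ℝ}
    {B : Matrix m n ℝ} (hA : ‖A‖ ≤ 1) (hB : ‖B‖ ≤ 1) : ‖A * B‖ ≤ 1 :=
  (l2_opNorm_mul A B).trans (mul_le_one₀ hA (norm_nonneg B) hB)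

end Matrix

def rectId (p n : ℕ) : Matrix (Fin p) (Fin n) ℝ :=
  of fun i j => if (i : ℕ) = j then 1 else 0

theorem rectId_self (p : ℕ) : rectId p p = 1 := by
  ext i j
  simp [rectId, one_apply, Fin.val_inj]

theorem rectId_transpose (p n : ℕ) : (rectId p n)ᵀ = rectId n p := by
  ext i j
  simp [rectId, eq_comm]

theorem rectId_mul_rectId {p n q : ℕ} (h : min p q ≤ n) :
    rectId p n * rectId n q = rectId p q := by
  ext i k
  simp only [rectId, mul_apply, of_apply, mul_ite, mul_one, mul_zero]
  by_cases hik : (i : ℕ) = k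
  · have hin : (i : ℕ) < n := by have := i.isLt; have := k.isLt; omega
    rw [sum_eq_single ⟨i, hin⟩ (fun j _ hj => by simp [Fin.ext_iff] at hj ⊢; omega)
      (by simp)]
    simp [hik]
  · rw [if_neg hik]
    refine sum_eq_zero fun j _ => ?_
    split_ifs with h1 h2
    exacts [absurd (h2.trans h1) hik, rfl, rfl]

theorem rectId_mul_diagonal {p n : ℕ} (s : ℕ → ℝ) :
    rectId p n * diagonal (fun j : Fin n => s j) =
      diagonal (fun i : Fin p => s i) * rectId p n := by
  ext i j
  by_cases h : (i : ℕ) = j <;> simp [rectId, h]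

theorem l2_opNorm_rectId_le (p n : ℕ) : ‖rectId p n‖ ≤ 1 := by
  rcases le_total p n with h | h
  · rw [← l2_opNorm_transpose, rectId_transpose]
    refine l2_opNorm_le_one_of_transpose_mul_self ?_
    rw [rectId_transpose, rectId_mul_rectId (by omega), rectId_self]
  · refine l2_opNorm_le_one_of_transpose_mul_self ?_
    rw [rectId_transpose, rectId_mul_rectId (by omega), rectId_self]

theorem card_mul_vnorm_sq_le {p n : ℕ} (N : Matrix (Fin p) (Fin n) ℝ) (s : Finset (Fin n))
    {v : Fin p → ℝ} (hv : ∀ j ∈ s, ∀ a, N a j = v a) : #s * vnorm v ^ 2 ≤ ‖N‖ ^ 2 := by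
  set x : Fin n → ℝ := fun j => if j ∈ s then 1 else 0
  have hNx : vnorm (N *ᵥ x) ^ 2 = (#s : ℝ) ^ 2 * vnorm v ^ 2 := by
    have : ∀ a, (N *ᵥ x) a = #s * v a := fun a => by
      simp [x, mulVec, dotProduct, sum_ite_mem, sum_congr rfl fun j hj => hv j hj a]
    simp_rw [vnorm_sq, this, mul_pow, mul_sum]
  have hx : vnorm x ^ 2 = #s := by
    rw [vnorm_sq]; simp [x, apply_ite (· ^ 2)]
  have h := pow_le_pow_left₀ (vnorm_nonneg _) (vnorm_mulVec_le N x) 2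
  rw [hNx, mul_pow, hx] at h
  rcases (Nat.cast_nonneg (α := ℝ) #s).eq_or_lt with hs | hs
  · rw [← hs, zero_mul]; positivity
  · nlinarith

theorem sum_vnorm_sq_mulVec_col_le {q p n : ℕ} (A : Matrix (Fin q) (Fin p) ℝ)
    (E : Matrix (Fin p) (Fin n) ℝ) :
    ∑ j, vnorm (A *ᵥ fun a => E a j) ^ 2 ≤ ‖E‖ ^ 2 * ∑ l, vnorm (A l) ^ 2 := by
  have hswap : ∑ j, vnorm (A *ᵥ fun a => E a j) ^ 2 = ∑ l, vnorm (Eᵀ *ᵥ A l) ^ 2 := by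
    simp only [vnorm_sq]
    rw [sum_comm]
    simp [mulVec, dotProduct, mul_comm]
  rw [hswap, mul_sum]
  refine sum_le_sum fun l _ => ?_
  rw [← mul_pow, ← l2_opNorm_transpose E]
  exact pow_le_pow_left₀ (vnorm_nonneg _) (vnorm_mulVec_le _ _) 2

theorem projr_eq {p : ℕ} (U : Matrix (Fin p) (Fin p) ℝ) (r : ℕ) :
    projr U r = U * diagonal (fun l : Fin p => if (l : ℕ) < r then 1 else 0) * Uᵀ := by
  ext i j
  rw [mul_apply]
  simp [projr, mul_diagonal]

theorem one_sub_projr_eq {p : ℕ} {U : Matrix (Fin p) (Fin p) ℝ} (hU : Uᵀ * U = 1) (r : ℕ) :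
    1 - projr U r = U * diagonal (fun l : Fin p => if (l : ℕ) < r then 0 else 1) * Uᵀ := by
  have hUU : U * Uᵀ = 1 := mul_eq_one_comm.mp hU
  calc 1 - projr U r
      = U * (diagonal (fun _ => 1) - diagonal (fun l : Fin p => if (l : ℕ) < r then 1 else 0)) *
          Uᵀ := by
        rw [diagonal_one, Matrix.mul_sub, Matrix.sub_mul, Matrix.mul_one, hUU, projr_eq]
    _ = _ := by
        rw [diagonal_sub]
        congr 3
        funext l
        split_ifs <;> norm_num

theorem l2_opNorm_one_sub_projr_le {p : ℕ} {U : Matrix (Fin p) (Fin p) ℝ} (hU : Uᵀ * U = 1)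
    (r : ℕ) : ‖1 - projr U r‖ ≤ 1 := by
  rw [one_sub_projr_eq hU]
  refine l2_opNorm_mul_le_one (l2_opNorm_mul_le_one (l2_opNorm_le_one_of_transpose_mul_self hU)
    (l2_opNorm_diagonal_le zero_le_one fun l => ?_)) ?_
  · split_ifs <;> norm_num
  · rw [l2_opNorm_transpose]; exact l2_opNorm_le_one_of_transpose_mul_self hU

theorem sum_vnorm_sq_projr_mulVec_le {p n : ℕ} {U : Matrix (Fin p) (Fin p) ℝ} (hU : Uᵀ * U = 1)
    (r : ℕ) (E : Matrix (Fin p) (Fin n) ℝ) :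
    ∑ j, vnorm (projr U r *ᵥ fun a => E a j) ^ 2 ≤ r * ‖E‖ ^ 2 := by
  set A := diagonal (fun l : Fin p => if (l : ℕ) < r then (1 : ℝ) else 0) * Uᵀ
  have hproj : ∀ x, vnorm (projr U r *ᵥ x) ≤ vnorm (A *ᵥ x) := fun x => by
    rw [projr_eq, Matrix.mul_assoc, ← mulVec_mulVec]
    exact (vnorm_mulVec_le U _).trans
      (mul_le_of_le_one_left (vnorm_nonneg _) (l2_opNorm_le_one_of_transpose_mul_self hU))
  have hrows : ∀ l, vnorm (A l) ^ 2 = if (l : ℕ) < r then 1 else 0 := fun l => by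
    have hcol : ∑ a, U a l ^ 2 = 1 := by
      simpa [mul_apply, sq] using congrFun (congrFun hU l) l
    rw [vnorm_sq]
    split_ifs <;> simp [A, diagonal_mul, *]
  calc ∑ j, vnorm (projr U r *ᵥ fun a => E a j) ^ 2
      ≤ ∑ j, vnorm (A *ᵥ fun a => E a j) ^ 2 :=
        sum_le_sum fun j _ => pow_le_pow_left₀ (vnorm_nonneg _) (hproj _) 2
    _ ≤ ‖E‖ ^ 2 * ∑ l, vnorm (A l) ^ 2 := sum_vnorm_sq_mulVec_col_le A E
    _ ≤ ‖E‖ ^ 2 * r := by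
        gcongr
        simp only [hrows, sum_boole, Fin.card_filter_val_lt]
        exact_mod_cast min_le_right p r
    _ = r * ‖E‖ ^ 2 := mul_comm _ _

namespace SVDData

variable {p n : ℕ} {X : Matrix (Fin p) (Fin n) ℝ} (S : SVDData p n X)

theorem eq_diagonal_mul_rectId :
    X = S.U * diagonal (fun i : Fin p => S.sv i) * rectId p n * S.Vᵀ := by
  conv_lhs => rw [S.decomp]
  rw [Matrix.mul_assoc S.U (diagonal _)]
  congr 2
  ext i j
  simp [rectId, diagonal_mul]

theorem one_sub_projr_mul_eq (r : ℕ) :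
    (1 - projr S.U r) * X =
      S.U * diagonal (fun i : Fin p => if (i : ℕ) < r then 0 else S.sv i) * rectId p n * S.Vᵀ := by
  conv_lhs => rw [one_sub_projr_eq S.hU]; arg 2; rw [S.eq_diagonal_mul_rectId]
  simp only [Matrix.mul_assoc]
  rw [← Matrix.mul_assoc S.Uᵀ, S.hU, Matrix.one_mul, ← Matrix.mul_assoc (diagonal _),
    diagonal_mul_diagonal]
  congr 3
  funext i
  split_ifs <;> ring

theorem l2_opNorm_one_sub_projr_mul_le (r : ℕ) : ‖(1 - projr S.U r) * X‖ ≤ S.sv r := by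
  rw [S.one_sub_projr_mul_eq]
  have hdiag : ‖diagonal (fun i : Fin p => if (i : ℕ) < r then 0 else S.sv i)‖ ≤ S.sv r := by
    refine l2_opNorm_diagonal_le (S.sv_nonneg r) fun i => ?_
    split_ifs with h
    · simpa using S.sv_nonneg r
    · rw [abs_of_nonneg (S.sv_nonneg _)]; exact S.sv_anti _ _ (by omega)
  calc _ ≤ ‖S.U‖ * ‖diagonal (fun i : Fin p => if (i : ℕ) < r then 0 else S.sv i)‖ *
        ‖rectId p n‖ * ‖S.Vᵀ‖ := by
        refine (l2_opNorm_mul _ _).trans ?_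
        gcongr
        refine (l2_opNorm_mul _ _).trans ?_
        gcongr
        exact l2_opNorm_mul _ _
    _ ≤ 1 * S.sv r * 1 * 1 := by
        have hU := l2_opNorm_le_one_of_transpose_mul_self S.hU
        have hV : ‖S.Vᵀ‖ ≤ 1 := by
          rw [l2_opNorm_transpose]; exact l2_opNorm_le_one_of_transpose_mul_self S.hV
        have := l2_opNorm_rectId_le p n
        have := S.sv_nonneg r
        gcongr
    _ = S.sv r := by ring

theorem rectId_mul_transpose_U_mul_mul_V_mul_rectId {r : ℕ} (hp : r ≤ p) (hn : r ≤ n) :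
    rectId r p * S.Uᵀ * X * (S.V * rectId n r) = diagonal (fun i : Fin r => S.sv i) := by
  conv_lhs => arg 1; arg 2; rw [S.eq_diagonal_mul_rectId]
  simp only [Matrix.mul_assoc]
  rw [← Matrix.mul_assoc S.Uᵀ, S.hU, Matrix.one_mul, ← Matrix.mul_assoc S.Vᵀ, S.hV,
    Matrix.one_mul, ← Matrix.mul_assoc (rectId r p), rectId_mul_diagonal, Matrix.mul_assoc,
    rectId_mul_rectId (by omega), rectId_mul_rectId (by omega), rectId_self, Matrix.mul_one]

theorem sv_le_l2_opNorm_of_rank_le {Pm E : Matrix (Fin p) (Fin n) ℝ} (hX : X = Pm + E) {r : ℕ}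
    (hrank : Pm.rank ≤ r) : S.sv r ≤ ‖E‖ := by
  subst hX
  by_cases hmin : min p n ≤ r
  · rw [S.sv_zero r hmin]; exact norm_nonneg E
  set K := rectId (r + 1) p * S.Uᵀ
  set Vs := S.V * rectId n (r + 1)
  -- `Vs c` lies in the span of the first `r + 1` right singular vectors and in the kernel of `Pm`,
  -- so `X` and `E` agree on it.
  obtain ⟨c, hc0, hc⟩ := (Pm * Vs).exists_mulVec_eq_zero_of_rank_lt <| by
    simpa using (rank_mul_le_left Pm Vs).trans_lt (Nat.lt_succ_of_le hrank)
  have hdiag : diagonal (fun i : Fin (r + 1) => S.sv i) *ᵥ c = (K * E * Vs) *ᵥ c := by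
    rw [← S.rectId_mul_transpose_U_mul_mul_V_mul_rectId (by omega) (by omega),
      Matrix.mul_add, Matrix.add_mul, add_mulVec, Matrix.mul_assoc K Pm, ← mulVec_mulVec, hc,
      mulVec_zero, zero_add]
  have hKEV : ‖K * E * Vs‖ ≤ ‖E‖ := by
    have hK : ‖K‖ ≤ 1 := l2_opNorm_mul_le_one (l2_opNorm_rectId_le _ _)
      (by rw [l2_opNorm_transpose]; exact l2_opNorm_le_one_of_transpose_mul_self S.hU)
    have hVs : ‖Vs‖ ≤ 1 :=
      l2_opNorm_mul_le_one (l2_opNorm_le_one_of_transpose_mul_self S.hV) (l2_opNorm_rectId_le _ _)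
    calc ‖K * E * Vs‖ ≤ ‖K‖ * ‖E‖ * ‖Vs‖ :=
          (l2_opNorm_mul _ _).trans (by gcongr; exact l2_opNorm_mul _ _)
      _ ≤ 1 * ‖E‖ * 1 := by gcongr
      _ = ‖E‖ := by ring
  have key : S.sv r * vnorm c ≤ ‖E‖ * vnorm c :=
    calc S.sv r * vnorm c ≤ vnorm (diagonal (fun i : Fin (r + 1) => S.sv i) *ᵥ c) :=
          mul_vnorm_le_vnorm_diagonal_mulVec (S.sv_nonneg r) (fun i => by
            rw [abs_of_nonneg (S.sv_nonneg _)]; exact S.sv_anti _ _ (by omega)) c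
      _ ≤ ‖K * E * Vs‖ * vnorm c := hdiag ▸ vnorm_mulVec_le _ c
      _ ≤ ‖E‖ * vnorm c := by gcongr; exact vnorm_nonneg c
  exact le_of_mul_le_mul_right key (vnorm_pos hc0)

theorem l2_opNorm_one_sub_projr_mul_le_two_mul {Pm E : Matrix (Fin p) (Fin n) ℝ}
    (hX : X = Pm + E) {r : ℕ} (hrank : Pm.rank ≤ r) : ‖(1 - projr S.U r) * Pm‖ ≤ 2 * ‖E‖ := by
  subst hX
  have hPm : (1 - projr S.U r) * Pm =
      (1 - projr S.U r) * (Pm + E) - (1 - projr S.U r) * E := by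
    rw [Matrix.mul_add, add_sub_cancel_right]
  have hE : ‖(1 - projr S.U r) * E‖ ≤ ‖E‖ :=
    (l2_opNorm_mul _ _).trans (mul_le_of_le_one_left (norm_nonneg E)
      (l2_opNorm_one_sub_projr_le S.hU r))
  rw [hPm]
  linarith [norm_sub_le ((1 - projr S.U r) * (Pm + E)) ((1 - projr S.U r) * E),
    S.l2_opNorm_one_sub_projr_mul_le r, S.sv_le_l2_opNorm_of_rank_le rfl hrank]

theorem card_mul_vnorm_sub_projr_mulVec_sq_le {k : ℕ} {z : Fin n → Fin k}
    {θ : Fin k → Fin p → ℝ} {Pm E : Matrix (Fin p) (Fin n) ℝ} (hP : ∀ a j, Pm a j = θ (z j) a)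
    (hX : X = Pm + E) {r : ℕ} (hrank : Pm.rank ≤ r) (a : Fin k) :
    #{j | z j = a} * vnorm (θ a - projr S.U r *ᵥ θ a) ^ 2 ≤ (2 * ‖E‖) ^ 2 := by
  refine (card_mul_vnorm_sq_le ((1 - projr S.U r) * Pm) _ fun j hj b => ?_).trans
    (pow_le_pow_left₀ (norm_nonneg _) (S.l2_opNorm_one_sub_projr_mul_le_two_mul hX hrank) 2)
  have hcol : ((1 - projr S.U r) * Pm : Matrix (Fin p) (Fin n) ℝ) b j =
      ((1 - projr S.U r) *ᵥ θ (z j)) b := by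
    simp [mul_apply, mulVec, dotProduct, hP]
  rw [hcol, sub_mulVec, one_mulVec, (mem_filter.1 hj).2]

end SVDData

section KMeans

variable {M ι α : Type*} [PseudoMetricSpace M]

theorem eq_of_dist_lt_of_separated {θ : α → M} {Δ : ℝ}
    (hsep : ∀ a b, a ≠ b → Δ ≤ dist (θ a) (θ b)) {a b : α} (h : dist (θ a) (θ b) < Δ) :
    a = b :=
  by_contra fun hab => absurd h (not_lt.2 (hsep a b hab))

theorem exists_perm_dist_centers_le [Finite α] {y : ι → M} {θ c : α → M} {z zh : ι → α} {Δ d : ℝ}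
    (hsep : ∀ a b, a ≠ b → Δ ≤ dist (θ a) (θ b)) (hΔ : 12 * d < Δ) {B : Finset ι}
    (hgood : ∀ j ∉ B, dist (y j) (c (zh j)) ≤ 2 * d ∧ dist (y j) (θ (z j)) ≤ 4 * d)
    (hcover : ∀ a, ∃ j ∉ B, z j = a) :
    ∃ σ : Equiv.Perm α, (∀ a, dist (c (σ a)) (θ a) ≤ 6 * d) ∧ ∀ j ∉ B, zh j = σ (z j) := by
  choose g hgB hgz using hcover
  have hcen : ∀ a, dist (c (zh (g a))) (θ a) ≤ 6 * d := fun a => by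
    have h := hgood (g a) (hgB a)
    rw [hgz] at h
    linarith [dist_triangle (c (zh (g a))) (y (g a)) (θ a), dist_comm (c (zh (g a))) (y (g a))]
  have hinj : Function.Injective fun a => zh (g a) := fun a b hab => by
    refine eq_of_dist_lt_of_separated hsep ?_
    have ha := hcen a
    rw [show zh (g a) = zh (g b) from hab] at ha
    linarith [dist_triangle (θ a) (c (zh (g b))) (θ b), dist_comm (θ a) (c (zh (g b))), hcen b]
  let σ := Equiv.ofBijective _ hinj.bijective_of_finite
  refine ⟨σ, hcen, fun j hj => ?_⟩
  have hb := hcen (σ.symm (zh j))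
  change dist (c (σ (σ.symm (zh j)))) _ ≤ _ at hb
  rw [σ.apply_symm_apply] at hb
  have hz : z j = σ.symm (zh j) := eq_of_dist_lt_of_separated hsep <| by
    linarith [dist_triangle4 (θ (z j)) (y j) (c (zh j)) (θ (σ.symm (zh j))),
      dist_comm (θ (z j)) (y j), hgood j hj]
  rw [hz, σ.apply_symm_apply]

theorem perm_eq_of_two_mul_card_lt [Fintype ι] [DecidableEq ι] [DecidableEq α] {z zh : ι → α}
    {σ φ : Equiv.Perm α} {B : Finset ι} (hσ : ∀ j ∉ B, zh j = σ (z j))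
    (hφ : #{j | zh j ≠ φ (z j)} ≤ #{j | zh j ≠ σ (z j)}) (hB : ∀ a, 2 * #B < #{j | z j = a}) :
    φ = σ := by
  have hσB : ({j | zh j ≠ σ (z j)} : Finset ι) ⊆ B := fun j hj => by
    by_contra hjB
    exact (mem_filter.1 hj).2 (hσ j hjB)
  ext a
  by_contra hne
  have hsub : ({j | z j = a} : Finset ι) ⊆
      ({j | zh j ≠ φ (z j)} : Finset ι) ∪ ({j | zh j ≠ σ (z j)} : Finset ι) := fun j hj => by
    simp only [mem_filter, mem_univ, true_and, mem_union] at hj ⊢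
    subst hj
    by_contra! h
    exact hne (h.1.symm.trans h.2)
  have := (card_le_card hsub).trans (card_union_le _ _)
  have := card_le_card hσB
  have := hB a
  omega

theorem card_filter_lt_mul_lt [Fintype ι] {f : ι → ℝ} {t b : ℝ} (hf : ∀ j, 0 ≤ f j)
    (hsum : ∑ j, f j ≤ b) (hb : 0 < b) : #{j | t < f j} * t < b := by
  rcases eq_empty_or_nonempty ({j | t < f j} : Finset ι) with h | h
  · simpa [h] using hb
  calc #{j | t < f j} * t = ∑ j ∈ {j | t < f j}, t := by rw [sum_const, nsmul_eq_mul]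
    _ < ∑ j ∈ {j | t < f j}, f j := sum_lt_sum_of_nonempty h fun j hj => (mem_filter.1 hj).2
    _ ≤ ∑ j, f j := sum_le_sum_of_subset_of_nonneg (subset_univ _) fun j _ _ => hf j
    _ ≤ b := hsum

theorem le_two_mul_dist_add_of_ne_perm {θ c : α → M} {σ : Equiv.Perm α} {Δ d : ℝ}
    (hsep : ∀ a b, a ≠ b → Δ ≤ dist (θ a) (θ b)) (hcen : ∀ a, dist (c (σ a)) (θ a) ≤ 6 * d)
    {x : M} {a b : α} (hopt : ∀ b', dist x (c b) ≤ dist x (c b')) (hb : b ≠ σ a) :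
    Δ ≤ 2 * dist x (θ a) + 12 * d := by
  have hne : a ≠ σ.symm b := fun h => hb (by rw [h, σ.apply_symm_apply])
  have hb' := hcen (σ.symm b)
  rw [σ.apply_symm_apply] at hb'
  linarith [hsep a _ hne, dist_triangle4 (θ a) x (c b) (θ (σ.symm b)), hopt (σ a),
    dist_triangle x (θ a) (c (σ a)), dist_comm (θ a) x, dist_comm (θ a) (c (σ a)), hcen a]

theorem le_two_mul_add_of_misclustered [Fintype ι] [DecidableEq ι] [Fintype α] [DecidableEq α]
    {y : ι → M} {θ c : α → M} {z zh : ι → α} {e : ι → ℝ} {Δ d m : ℝ} (hd : 0 < d) (hm : 0 < m)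
    (hsize : ∀ a, m ≤ #{j | z j = a})
    (hsep : ∀ a b, a ≠ b → Δ ≤ dist (θ a) (θ b)) (hΔ : 16 * d ≤ Δ)
    (hy : ∀ j, dist (y j) (θ (z j)) ≤ 2 * d + e j)
    (hcost : ∑ j, dist (y j) (c (zh j)) ^ 2 ≤ d ^ 2 * m) (he : ∑ j, e j ^ 2 ≤ d ^ 2 * m)
    {φ : Equiv.Perm α} (hφ : ∀ ψ : Equiv.Perm α, #{j | zh j ≠ φ (z j)} ≤ #{j | zh j ≠ ψ (z j)})
    {i : ι} (hopt : ∀ b, dist (y i) (c (zh i)) ≤ dist (y i) (c b)) (hi : zh i ≠ φ (z i)) :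
    Δ ≤ 2 * e i + 16 * d := by
  set B : Finset ι := {j | (2 * d) ^ 2 < dist (y j) (c (zh j)) ^ 2 + e j ^ 2}
  have hB : #B * (2 * d) ^ 2 < 2 * (d ^ 2 * m) :=
    card_filter_lt_mul_lt (fun j => by positivity) (by rw [sum_add_distrib]; linarith)
      (by positivity)
  have hBsize : ∀ a, 2 * #B < #{j | z j = a} := fun a => by
    have h : (2 * #B : ℝ) < #{j | z j = a} := by nlinarith [hsize a]
    exact_mod_cast h
  have hgood : ∀ j ∉ B, dist (y j) (c (zh j)) ≤ 2 * d ∧ dist (y j) (θ (z j)) ≤ 4 * d := by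
    intro j hj
    simp only [B, mem_filter, mem_univ, true_and, not_lt] at hj
    have hdist : dist (y j) (c (zh j)) ≤ 2 * d := by
      nlinarith [dist_nonneg (x := y j) (y := c (zh j))]
    have he : e j ≤ 2 * d := by nlinarith
    exact ⟨hdist, by linarith [hy j]⟩
  have hcover : ∀ a, ∃ j ∉ B, z j = a := by
    intro a
    by_contra! h
    have hsub : ({j | z j = a} : Finset ι) ⊆ B := fun j hj => by
      by_contra hjB
      exact h j hjB (mem_filter.1 hj).2
    have := card_le_card hsub
    have := hBsize a
    omega
  obtain ⟨σ, hcen, hσ⟩ := exists_perm_dist_centers_le hsep (by linarith) hgood hcover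
  obtain rfl := perm_eq_of_two_mul_card_lt hσ (hφ σ) hBsize
  linarith [le_two_mul_dist_add_of_ne_perm hsep hcen hopt hi, hy i]

end KMeans

theorem IsKMeans.sum_vnorm_sq_le {p n k : ℕ} {W : Matrix (Fin p) (Fin p) ℝ}
    {X : Matrix (Fin p) (Fin n) ℝ} {z : Fin n → Fin k} {c : Fin k → Fin p → ℝ}
    (h : IsKMeans W X z c) (z' : Fin n → Fin k) (c' : Fin k → Fin p → ℝ) :
    ∑ i, vnorm (W *ᵥ (fun b => X b i) - c (z i)) ^ 2 ≤
      ∑ i, vnorm (W *ᵥ (fun b => X b i) - c' (z' i)) ^ 2 := by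
  simpa only [vnorm_sq, Pi.sub_apply] using h z' c'

theorem IsKMeans.vnorm_le {p n k : ℕ} {W : Matrix (Fin p) (Fin p) ℝ}
    {X : Matrix (Fin p) (Fin n) ℝ} {z : Fin n → Fin k} {c : Fin k → Fin p → ℝ}
    (h : IsKMeans W X z c) (i : Fin n) (b : Fin k) :
    vnorm (W *ᵥ (fun a => X a i) - c (z i)) ≤ vnorm (W *ᵥ (fun a => X a i) - c b) := by
  have hsum := h.sum_vnorm_sq_le (Function.update z i b) c
  have hrest : ∑ j ∈ univ.erase i, vnorm (W *ᵥ (fun a => X a j) - c (Function.update z i b j)) ^ 2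
      = ∑ j ∈ univ.erase i, vnorm (W *ᵥ (fun a => X a j) - c (z j)) ^ 2 :=
    sum_congr rfl fun j hj => by rw [Function.update_of_ne (ne_of_mem_erase hj)]
  rw [← add_sum_erase _ _ (mem_univ i), ← add_sum_erase _ _ (mem_univ i), Function.update_self,
    hrest] at hsum
  exact (pow_le_pow_iff_left₀ (vnorm_nonneg _) (vnorm_nonneg _) two_ne_zero).1 (by linarith)

theorem Delta_le_vnorm_sub {p k : ℕ} (θ : Fin k → Fin p → ℝ) {a b : Fin k} (hab : a ≠ b) :
    Delta θ ≤ vnorm (θ a - θ b) :=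
  ciInf_le (Set.finite_range _).bddBelow (⟨(a, b), hab⟩ : {q : Fin k × Fin k // q.1 ≠ q.2})

theorem card_le_of_miscl_eq {n k : ℕ} {zh z : Fin n → Fin k} {φ : Equiv.Perm (Fin k)}
    (hn : 0 < n) (h : miscl zh z = (#{i | zh i ≠ φ (z i)} : ℝ) / n) (ψ : Equiv.Perm (Fin k)) :
    #{i | zh i ≠ φ (z i)} ≤ #{i | zh i ≠ ψ (z i)} := by
  rw [miscl, div_left_inj' (by positivity)] at h
  exact_mod_cast h ▸ ciInf_le (Set.finite_range _).bddBelow ψ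

theorem sq_mul_iInf_card_eq {n k : ℕ} {z : Fin n → Fin k} (hβ : 0 < betaMin n k z)
    (hn : 0 < n) (e : ℝ) :
    ((Real.sqrt (betaMin n k z))⁻¹ * k * (Real.sqrt n)⁻¹ * e) ^ 2 *
      ⨅ a, (#{j | z j = a} : ℝ) = k * e ^ 2 := by
  have hβm : betaMin n k z = k / n * ⨅ a, (#{j | z j = a} : ℝ) := rfl
  have hm : 0 < ⨅ a, (#{j | z j = a} : ℝ) := pos_of_mul_pos_right (hβm ▸ hβ) (by positivity)
  rw [mul_pow, mul_pow, mul_pow, inv_pow, inv_pow, Real.sq_sqrt hβ.le,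
    Real.sq_sqrt (Nat.cast_nonneg n), hβm]
  field_simp

theorem Delta_le_of_misclustered {p n k : ℕ} {z : Fin n → Fin k}
    {θ : Fin k → Fin p → ℝ} {Pm E X : Matrix (Fin p) (Fin n) ℝ} (hP : ∀ a j, Pm a j = θ (z j) a)
    (hX : X = Pm + E) {r : ℕ} (hrank : Pm.rank ≤ r) (hrk : r ≤ k) (S : SVDData p n X)
    {zh : Fin n → Fin k} {c : Fin k → Fin p → ℝ} (hkm : IsKMeans (projr S.U r) X zh c)
    {d m : ℝ} (hd : 0 < d) (hm : 0 < m) (hsize : ∀ a, m ≤ #{j | z j = a})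
    (hE : k * ‖E‖ ^ 2 ≤ d ^ 2 * m) (hΔ : 16 * d ≤ Delta θ) {φ : Equiv.Perm (Fin k)}
    (hφ : ∀ ψ : Equiv.Perm (Fin k), #{j | zh j ≠ φ (z j)} ≤ #{j | zh j ≠ ψ (z j)})
    {i : Fin n} (hi : zh i ≠ φ (z i)) :
    Delta θ ≤ 2 * vnorm (projr S.U r *ᵥ fun a => E a i) + 16 * d := by
  set W := projr S.U r
  have hk : (1 : ℝ) ≤ k := by exact_mod_cast (zh i).pos
  have hcol : ∀ j, W *ᵥ (fun a => X a j) = W *ᵥ θ (z j) + W *ᵥ fun a => E a j := fun j => by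
    rw [← mulVec_add]; congr 1; funext a; simp [hX, hP]
  have hcenter : ∀ a, vnorm (θ a - W *ᵥ θ a) ≤ 2 * d := fun a => by
    have h := S.card_mul_vnorm_sub_projr_mulVec_sq_le hP hX hrank a
    have hpos : (0 : ℝ) < #{j | z j = a} := hm.trans_le (hsize a)
    refine (pow_le_pow_iff_left₀ (vnorm_nonneg _) (by positivity) two_ne_zero).1
      (le_of_mul_le_mul_left ?_ hpos)
    nlinarith [hsize a, norm_nonneg E]
  have hnoise : ∑ j, vnorm (W *ᵥ fun a => E a j) ^ 2 ≤ d ^ 2 * m :=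
    (sum_vnorm_sq_projr_mulVec_le S.hU r E).trans <| le_trans (by gcongr) hE
  have hcost : ∑ j, vnorm (W *ᵥ (fun a => X a j) - c (zh j)) ^ 2 ≤ d ^ 2 * m := by
    refine (hkm.sum_vnorm_sq_le z fun a => W *ᵥ θ a).trans (le_of_eq_of_le ?_ hnoise)
    simp only [hcol, add_sub_cancel_left]
  have hy : ∀ j, dist (WithLp.toLp 2 (W *ᵥ fun a => X a j) : EuclideanSpace ℝ (Fin p))
      (WithLp.toLp 2 (θ (z j))) ≤ 2 * d + vnorm (W *ᵥ fun a => E a j) := fun j => by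
    have h := dist_triangle (WithLp.toLp 2 (W *ᵥ fun a => X a j) : EuclideanSpace ℝ (Fin p))
      (WithLp.toLp 2 (W *ᵥ θ (z j))) (WithLp.toLp 2 (θ (z j)))
    rw [dist_comm (WithLp.toLp 2 (W *ᵥ θ (z j)))] at h
    simp only [dist_toLp_eq_vnorm, hcol, add_sub_cancel_left] at h ⊢
    linarith [hcenter (z j)]
  refine le_two_mul_add_of_misclustered (y := fun j => WithLp.toLp 2 (W *ᵥ fun a => X a j))
    (θ := fun a => WithLp.toLp 2 (θ a)) (c := fun b => WithLp.toLp 2 (c b)) hd hm hsize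
    (fun a b hab => ?_) hΔ hy (by simpa only [dist_toLp_eq_vnorm] using hcost) hnoise hφ
    (fun b => by simpa only [dist_toLp_eq_vnorm] using hkm.vnorm_le i b) hi
  rw [dist_toLp_eq_vnorm]
  exact Delta_le_vnorm_sub θ hab

/-- **Lemma 1 (entrywise error decomposition of spectral clustering).**
There is a universal constant `C > 0` such that for any mixture model `X = P + E` with
`rank P = κ ≤ r ≤ k`, if `ψ₀ := Δ/(β^{-1/2} k n^{-1/2} ‖E‖) ≥ 16` and `φ` is the bijection
of `[k]` realizing `ℓ(ẑ,z*)`, then for every `i`,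
`𝟙{ẑ_i ≠ φ(z*_i)} ≤ 𝟙{(1 − Cψ₀^{-1})Δ ≤ 2‖Û_{1:r}Û_{1:r}ᵀ ε_i‖}`. -/
theorem entrywise_decomposition_simple :
    ∃ C : ℝ, 0 < C ∧
      ∀ (p n k : ℕ) (z : Fin n → Fin k) (θ : Fin k → Fin p → ℝ)
        (Pm E X : Matrix (Fin p) (Fin n) ℝ),
        (∀ a j, Pm a j = θ (z j) a) → X = Pm + E →
        ∀ κ r : ℕ, Pm.rank = κ → κ ≤ r → r ≤ k →
        ∀ (DX : SVDData p n X) (zh : Fin n → Fin k) (c : Fin k → Fin p → ℝ),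
          IsKMeans (projr DX.U r) X zh c →
        16 ≤ Delta θ /
            ((Real.sqrt (betaMin n k z))⁻¹ * (k : ℝ) * (Real.sqrt (n : ℝ))⁻¹ * opnorm E) →
        ∀ φ : Equiv.Perm (Fin k),
          miscl zh z = ((Finset.univ.filter fun i => zh i ≠ φ (z i)).card : ℝ) / n →
        ∀ i, zh i ≠ φ (z i) →
          (1 - C * (Delta θ /
              ((Real.sqrt (betaMin n k z))⁻¹ * (k : ℝ) * (Real.sqrt (n : ℝ))⁻¹ * opnorm E))⁻¹) *
            Delta θ ≤
          2 * vnorm ((projr DX.U r).mulVec fun a => E a i) := by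
  refine ⟨16, by norm_num, ?_⟩
  intro p n k z θ Pm E X hP hX κ r hrank hκr hrk DX zh c hkm hψ φ hφ i hi
  rw [opnorm_eq_norm] at hψ ⊢
  set d := (Real.sqrt (betaMin n k z))⁻¹ * (k : ℝ) * (Real.sqrt (n : ℝ))⁻¹ * ‖E‖ with hd_def
  have hd : 0 < d := by
    have hd0 : 0 ≤ d := mul_nonneg (by positivity) (norm_nonneg _)
    refine hd0.lt_of_ne fun h => ?_
    rw [← h, div_zero] at hψ
    norm_num at hψ
  have hβ : 0 < betaMin n k z := by
    by_contra! h
    rw [hd_def, Real.sqrt_eq_zero'.2 h, _root_.inv_zero, zero_mul, zero_mul, zero_mul] at hd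
    exact hd.false
  have hm : 0 < ⨅ a, (#{j | z j = a} : ℝ) := pos_of_mul_pos_right hβ (by positivity)
  have hΔ : 16 * d ≤ Delta θ := (le_div_iff₀ hd).1 hψ
  have key := Delta_le_of_misclustered hP hX (hrank ▸ hκr) hrk DX hkm hd hm
    (fun a => ciInf_le (Set.finite_range _).bddBelow a) (sq_mul_iInf_card_eq hβ i.pos ‖E‖).ge hΔ
    (card_le_of_miscl_eq i.pos hφ) hi
  rw [inv_div]
  have hΔ0 : 0 < Delta θ := by linarith
  field_simp
  linarith
end
end

section
/- Let E = (ε_1,…,ε_n) ∈ ℝ^{p×n} be a random matrix whose columns ε_i are independent SG_p(σ²) random vectors. Then for every t ≥ 2, P( ‖E‖ ≥ 4tσ(√n + √p) ) ≤ exp( −(t² − 3)n/2 ), where ‖E‖ is the operator (spectral) norm. -/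
open Matrix MeasureTheory ProbabilityTheory
open scoped BigOperators ENNReal NNReal

noncomputable section

/-- Scalar sub-Gaussian with variance proxy `σ2`: the moment generating function of `X`
exists and satisfies `E exp(tX) ≤ exp(σ2 t²/2)` for all `t`. -/
def IsSG {Ω : Type*} [MeasurableSpace Ω] (μ : Measure Ω) (X : Ω → ℝ) (σ2 : ℝ) : Prop :=
  ∀ t : ℝ, Integrable (fun ω => Real.exp (t * X ω)) μ ∧
    ∫ ω, Real.exp (t * X ω) ∂μ ≤ Real.exp (σ2 * t ^ 2 / 2)

/-- Vector sub-Gaussian with variance proxy `σ2`: every unit-vector projection is `SG(σ2)`. -/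
def IsSGVec {Ω : Type*} [MeasurableSpace Ω] (μ : Measure Ω) {p : ℕ}
    (X : Ω → Fin p → ℝ) (σ2 : ℝ) : Prop :=
  ∀ u : Fin p → ℝ, vnorm u = 1 → IsSG μ (fun ω => ∑ i, u i * X ω i) σ2

open Metric
open scoped RealInnerProductSpace

/-!
Take `1/4`-nets `N` and `M` of the unit spheres of `ℝᵖ` and `ℝⁿ`; comparing volumes of disjoint
balls, they can be chosen of sizes at most `9ᵖ` and `9ⁿ`. Approximating a unit vector `x` and the
direction of `E x` by net points shows that `‖E‖ < 2s` as soon as `uᵀ E v < s` for all `u ∈ N`,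
`v ∈ M`. For unit `u` and `v`, `uᵀ E v = ∑ᵢ vᵢ (uᵀ εᵢ)` is a unit-weighted sum of independent
`SG(σ²)` variables, hence `SG(σ²)`, so the Chernoff bound and a union bound with
`s = 2tσ(√n + √p)` give `9ᵖ⁺ⁿ exp(-2t²(n + p)) ≤ exp(-(t² - 3)n/2)`.
-/

section SubGaussian

variable {Ω : Type*} [MeasurableSpace Ω] {μ : Measure Ω}

theorem IsSG.hasSubgaussianMGF {X : Ω → ℝ} {c : ℝ≥0} (h : IsSG μ X c) :
    HasSubgaussianMGF X c μ :=
  ⟨fun t => (h t).1, fun t => (h t).2⟩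

theorem HasSubgaussianMGF.sum_mul_of_iIndepFun {ι : Type*} [Fintype ι] {Y : ι → Ω → ℝ}
    {c : ℝ≥0} (hindep : iIndepFun Y μ) (hY : ∀ i, HasSubgaussianMGF (Y i) c μ)
    {v : ι → ℝ} (hv : ∑ i, v i ^ 2 = 1) :
    HasSubgaussianMGF (fun ω => ∑ i, v i * Y i ω) c μ := by
  have hsum := HasSubgaussianMGF.sum_of_iIndepFun
    (hindep.comp (fun i y => v i * y) fun i => measurable_const_mul (v i))
    (s := Finset.univ) fun i _ => (hY i).const_mul (v i)
  convert hsum using 1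
  · rfl
  ext
  rw [NNReal.coe_sum]
  -- `const_mul` writes its constant with a bare subtype element, which `NNReal.coe_mul` misses
  change (c : ℝ) = ∑ i, v i ^ 2 * c
  rw [← Finset.sum_mul, hv, one_mul]

theorem IsSGVec.hasSubgaussianMGF_sum_mul {ι : Type*} [Fintype ι] {p : ℕ}
    {ε : ι → Ω → Fin p → ℝ} {c : ℝ≥0} (hindep : iIndepFun ε μ)
    (hsg : ∀ i, IsSGVec μ (ε i) c) {u : Fin p → ℝ} (hu : vnorm u = 1)
    {v : ι → ℝ} (hv : ∑ i, v i ^ 2 = 1) :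
    HasSubgaussianMGF (fun ω => ∑ i, v i * ∑ a, u a * ε i ω a) c μ :=
  HasSubgaussianMGF.sum_mul_of_iIndepFun
    (hindep.comp (fun _ x => ∑ a, u a * x a) fun _ => by fun_prop)
    (fun i => (hsg i u hu).hasSubgaussianMGF) hv

end SubGaussian

theorem vnorm_ofLp {d : ℕ} (u : EuclideanSpace ℝ (Fin d)) : vnorm u.ofLp = ‖u‖ := by
  simp [vnorm, EuclideanSpace.norm_eq]

theorem sum_sq_eq_one_of_norm_eq_one {d : ℕ} {u : EuclideanSpace ℝ (Fin d)} (hu : ‖u‖ = 1) :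
    ∑ i, u i ^ 2 = 1 := by
  simpa [EuclideanSpace.norm_eq, Real.sqrt_eq_one] using hu

theorem inner_toEuclideanLin {p n : ℕ} (A : Matrix (Fin p) (Fin n) ℝ)
    (u : EuclideanSpace ℝ (Fin p)) (v : EuclideanSpace ℝ (Fin n)) :
    ⟪u, Matrix.toEuclideanLin A v⟫ = ∑ i, v i * ∑ a, u a * A a i := by
  rw [EuclideanSpace.inner_eq_star_dotProduct, Matrix.toLpLin_apply, star_trivial,
    dotProduct_comm, dotProduct_mulVec, dotProduct_comm]
  rfl

section Packing

variable {E : Type*} [NormedAddCommGroup E] [NormedSpace ℝ E] [FiniteDimensional ℝ E]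

theorem card_le_of_isSeparated_of_subset_closedBall {δ : ℝ≥0} (hδ : 0 < δ) {F : Finset E}
    (hF : (F : Set E) ⊆ closedBall 0 1) (hsep : IsSeparated δ (F : Set E)) :
    (F.card : ℝ) ≤ (1 + 2 / δ) ^ Module.finrank ℝ E := by
  borelize E
  set μ : Measure E := Measure.addHaar
  have hr : (0 : ℝ) < δ / 2 := by positivity
  have hdisj : (F : Set E).PairwiseDisjoint fun x => ball x (δ / 2) := by
    intro x hx y hy hxy
    refine ball_disjoint_ball ?_
    have hxy : (δ : ℝ≥0∞) < edist x y := hsep hx hy hxy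
    rw [edist_nndist, ENNReal.coe_lt_coe, ← NNReal.coe_lt_coe, coe_nndist] at hxy
    linarith
  have hsub : (⋃ x ∈ F, ball x (δ / 2)) ⊆ ball (0 : E) (1 + δ / 2) := by
    refine Set.iUnion₂_subset fun x hx => ball_subset_ball' ?_
    have := hF hx
    rw [mem_closedBall, dist_zero_right] at this
    rw [dist_zero_right]; linarith
  have key : (F.card : ℝ≥0∞) * ENNReal.ofReal ((δ / 2) ^ Module.finrank ℝ E) * μ (ball 0 1) ≤
      ENNReal.ofReal ((1 + δ / 2) ^ Module.finrank ℝ E) * μ (ball 0 1) := by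
    calc (F.card : ℝ≥0∞) * ENNReal.ofReal ((δ / 2) ^ Module.finrank ℝ E) * μ (ball 0 1)
        = ∑ x ∈ F, μ (ball x (δ / 2)) := by
          simp only [μ.addHaar_ball_of_pos _ hr, Finset.sum_const, nsmul_eq_mul, mul_assoc]
      _ = μ (⋃ x ∈ F, ball x (δ / 2)) :=
          (measure_biUnion_finset hdisj fun x _ => measurableSet_ball).symm
      _ ≤ μ (ball 0 (1 + δ / 2)) := measure_mono hsub
      _ = _ := μ.addHaar_ball_of_pos _ (by positivity)
  rw [ENNReal.mul_le_mul_iff_left (measure_ball_pos μ 0 one_pos).ne' measure_ball_lt_top.ne,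
    ← ENNReal.ofReal_natCast, ← ENNReal.ofReal_mul (by positivity),
    ENNReal.ofReal_le_ofReal_iff (by positivity)] at key
  calc (F.card : ℝ) = F.card * (δ / 2) ^ Module.finrank ℝ E / (δ / 2) ^ Module.finrank ℝ E := by
        field_simp
    _ ≤ (1 + δ / 2) ^ Module.finrank ℝ E / (δ / 2) ^ Module.finrank ℝ E := by gcongr
    _ = (1 + 2 / δ) ^ Module.finrank ℝ E := by rw [← div_pow]; field_simp; ring

theorem encard_le_of_isSeparated_of_subset_closedBall {δ : ℝ≥0} (hδ : 0 < δ) {C : Set E}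
    (hC : C ⊆ closedBall 0 1) (hsep : IsSeparated δ C) :
    C.encard ≤ ⌊(1 + 2 / δ) ^ Module.finrank ℝ E⌋₊ := by
  by_contra! h
  obtain ⟨F, hFC, hFcard⟩ := Set.exists_subset_encard_eq (Order.add_one_le_of_lt h)
  have hF : F.Finite := Set.finite_of_encard_eq_coe hFcard
  have hcard := card_le_of_isSeparated_of_subset_closedBall hδ (F := hF.toFinset)
    (by simpa using hFC.trans hC) (by simpa using hsep.subset hFC)
  rw [← Set.ncard_eq_toFinset_card F hF, Set.ncard_def, hFcard] at hcard
  exact (Nat.lt_floor_add_one _).not_ge (by exact_mod_cast hcard)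

theorem exists_finset_isCover_card_le {δ : ℝ≥0} (hδ : 0 < δ) {A : Set E}
    (hA : A ⊆ closedBall 0 1) :
    ∃ N : Finset E, (N : Set E) ⊆ A ∧ IsCover δ A N ∧
      (N.card : ℝ) ≤ (1 + 2 / δ) ^ Module.finrank ℝ E := by
  have hpack : packingNumber δ A ≠ ⊤ := ne_top_of_le_ne_top (ENat.natCast_ne_top _) <|
    iSup₂_le fun C hCA => iSup_le fun hsep =>
      encard_le_of_isSeparated_of_subset_closedBall hδ (hCA.trans hA) hsep
  have hfin : (maximalSeparatedSet δ A).Finite :=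
    Set.encard_ne_top_iff.mp (encard_maximalSeparatedSet hpack ▸ hpack)
  refine ⟨hfin.toFinset, by simpa using maximalSeparatedSet_subset, by
    simpa using isCover_maximalSeparatedSet hpack, ?_⟩
  exact card_le_of_isSeparated_of_subset_closedBall hδ
    (by simpa using maximalSeparatedSet_subset.trans hA)
    (by simpa using isSeparated_maximalSeparatedSet)

end Packing

theorem exists_sphere_net (d : ℕ) :
    ∃ N : Finset (EuclideanSpace ℝ (Fin d)), (N : Set (EuclideanSpace ℝ (Fin d))) ⊆ sphere 0 1 ∧
      IsCover (1 / 4) (sphere 0 1) (N : Set (EuclideanSpace ℝ (Fin d))) ∧ N.card ≤ 9 ^ d := by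
  obtain ⟨N, hNs, hNc, hcard⟩ := exists_finset_isCover_card_le (E := EuclideanSpace ℝ (Fin d))
    (by norm_num : (0 : ℝ≥0) < 1 / 4) sphere_subset_closedBall
  refine ⟨N, hNs, hNc, ?_⟩
  have h9 : (1 + 2 / ((1 / 4 : ℝ≥0) : ℝ)) = 9 := by norm_num
  rw [finrank_euclideanSpace_fin, h9] at hcard
  exact_mod_cast hcard

section OpNorm

variable {E F : Type*} [NormedAddCommGroup E] [NormedSpace ℝ E]
  [NormedAddCommGroup F] [InnerProductSpace ℝ F]

theorem opNorm_le_two_mul_of_isCover {L : E →L[ℝ] F} {N : Set F} {M : Set E}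
    (hN : N ⊆ closedBall 0 1) (hNc : IsCover (1 / 4) (sphere 0 1) N)
    (hMc : IsCover (1 / 4) (sphere 0 1) M) {m : ℝ} (hm : 0 ≤ m)
    (h : ∀ u ∈ N, ∀ v ∈ M, ⟪u, L v⟫ ≤ m) : ‖L‖ ≤ 2 * m := by
  suffices ‖L‖ ≤ m + ‖L‖ / 2 by linarith
  refine L.opNorm_le_of_unit_norm (by positivity) fun x hx => ?_
  rcases eq_or_ne (L x) 0 with hLx | hLx
  · rw [hLx, norm_zero]; positivity
  set y := ‖L x‖⁻¹ • L x
  have hy : ‖y‖ = 1 := by simp [y, norm_smul, hLx]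
  have hyLx : ⟪y, L x⟫ = ‖L x‖ := by
    rw [real_inner_smul_left, real_inner_self_eq_norm_sq]; field_simp
  obtain ⟨u, hu, hyu⟩ :=
    Set.mem_iUnion₂.1 (hNc.subset_iUnion_closedBall (mem_sphere_zero_iff_norm.2 hy))
  obtain ⟨v, hv, hxv⟩ :=
    Set.mem_iUnion₂.1 (hMc.subset_iUnion_closedBall (mem_sphere_zero_iff_norm.2 hx))
  rw [mem_closedBall, dist_eq_norm] at hyu hxv
  push_cast at hyu hxv
  have hu1 : ‖u‖ ≤ 1 := mem_closedBall_zero_iff.1 (hN hu)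
  have hsplit : ‖L x‖ = ⟪u, L v⟫ + ⟪y - u, L x⟫ + ⟪u, L (x - v)⟫ := by
    rw [← hyLx, inner_sub_left, map_sub, inner_sub_right]; ring
  have h1 : ⟪y - u, L x⟫ ≤ ‖L‖ / 4 := calc
    ⟪y - u, L x⟫ ≤ ‖y - u‖ * ‖L x‖ := real_inner_le_norm _ _
    _ ≤ 1 / 4 * (‖L‖ * ‖x‖) := by gcongr; exact L.le_opNorm x
    _ = ‖L‖ / 4 := by rw [hx]; ring
  have h2 : ⟪u, L (x - v)⟫ ≤ ‖L‖ / 4 := calc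
    ⟪u, L (x - v)⟫ ≤ ‖u‖ * ‖L (x - v)‖ := real_inner_le_norm _ _
    _ ≤ 1 * (‖L‖ * (1 / 4)) := by gcongr; exact L.le_of_opNorm_le_of_le le_rfl hxv
    _ = ‖L‖ / 4 := by ring
  linarith [h u hu v hv]

theorem opNorm_lt_two_mul_of_isCover {L : E →L[ℝ] F} {N : Finset F} {M : Finset E}
    (hN : (N : Set F) ⊆ closedBall 0 1) (hNc : IsCover (1 / 4) (sphere 0 1) (N : Set F))
    (hMc : IsCover (1 / 4) (sphere 0 1) (M : Set E)) {m : ℝ} (hm : 0 < m)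
    (h : ∀ u ∈ N, ∀ v ∈ M, ⟪u, L v⟫ < m) : ‖L‖ < 2 * m := by
  obtain ⟨m', hm'0, hm'm, hm'⟩ :
      ∃ m', 0 ≤ m' ∧ m' < m ∧ ∀ u ∈ N, ∀ v ∈ M, ⟪u, L v⟫ ≤ m' := by
    rcases (N ×ˢ M).eq_empty_or_nonempty with hNM | hNM
    · refine ⟨0, le_rfl, hm, fun u hu v hv => ?_⟩
      simpa [hNM] using Finset.mk_mem_product hu hv
    obtain ⟨q, hq, hmax⟩ := (N ×ˢ M).exists_max_image (fun q => ⟪q.1, L q.2⟫) hNM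
    rw [Finset.mem_product] at hq
    exact ⟨max 0 ⟪q.1, L q.2⟫, le_max_left _ _, max_lt hm (h _ hq.1 _ hq.2),
      fun u hu v hv => (hmax (u, v) (Finset.mk_mem_product hu hv)).trans (le_max_right _ _)⟩
  linarith [opNorm_le_two_mul_of_isCover hN hNc hMc hm'0 hm']

end OpNorm

theorem nine_pow_le_exp (k : ℕ) : (9 : ℝ) ^ k ≤ Real.exp (3 * k) := by
  have h9 : (9 : ℝ) ≤ Real.exp 3 := by
    calc (9 : ℝ) ≤ (1 + 3 / 2 + (3 / 2) ^ 2 / 2) ^ 2 := by norm_num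
      _ ≤ Real.exp (3 / 2) ^ 2 := by gcongr; exact Real.quadratic_le_exp_of_nonneg (by norm_num)
      _ = Real.exp 3 := by rw [← Real.exp_nat_mul]; norm_num
  calc (9 : ℝ) ^ k ≤ Real.exp 3 ^ k := by gcongr
    _ = Real.exp (3 * k) := by rw [← Real.exp_nat_mul, mul_comm]

theorem nine_pow_mul_exp_le (n p : ℕ) {σ t : ℝ} (hσ : 0 < σ) (ht : 2 ≤ t) :
    (9 : ℝ) ^ p * 9 ^ n * Real.exp (-(2 * t * σ * (√n + √p)) ^ 2 / (2 * σ ^ 2)) ≤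
      Real.exp (-((t ^ 2 - 3) * n / 2)) := by
  have hsq : (n : ℝ) + p ≤ (√n + √p) ^ 2 := by
    nlinarith [Real.sq_sqrt n.cast_nonneg, Real.sq_sqrt p.cast_nonneg,
      Real.sqrt_nonneg n, Real.sqrt_nonneg p]
  have hexp : -(2 * t * σ * (√n + √p)) ^ 2 / (2 * σ ^ 2) = -(2 * t ^ 2 * (√n + √p) ^ 2) := by
    field_simp
  calc (9 : ℝ) ^ p * 9 ^ n * Real.exp (-(2 * t * σ * (√n + √p)) ^ 2 / (2 * σ ^ 2))
      ≤ Real.exp (3 * p) * Real.exp (3 * n) * Real.exp (-(2 * t ^ 2 * (n + p))) := by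
        rw [hexp]
        gcongr
        · exact nine_pow_le_exp p
        · exact nine_pow_le_exp n
    _ = Real.exp (3 * p + 3 * n - 2 * t ^ 2 * (n + p)) := by
        rw [← Real.exp_add, ← Real.exp_add]; ring_nf
    _ ≤ Real.exp (-((t ^ 2 - 3) * n / 2)) := by
        gcongr
        have ht2 : 4 ≤ t ^ 2 := by nlinarith
        nlinarith [(p.cast_nonneg : (0 : ℝ) ≤ p), (n.cast_nonneg : (0 : ℝ) ≤ n)]

section RandomMatrix

variable {Ω : Type*} [MeasurableSpace Ω] {μ : Measure Ω} [IsFiniteMeasure μ] {p n : ℕ}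
  {ε : Fin n → Ω → Fin p → ℝ} {c : ℝ≥0}

theorem measure_le_inner_toEuclideanLin_le (hindep : iIndepFun ε μ)
    (hsg : ∀ i, IsSGVec μ (ε i) c) {u : EuclideanSpace ℝ (Fin p)} (hu : ‖u‖ = 1)
    {v : EuclideanSpace ℝ (Fin n)} (hv : ‖v‖ = 1) {s : ℝ} (hs : 0 ≤ s) :
    μ {ω | s ≤ ⟪u, Matrix.toEuclideanLin (Matrix.of fun a i => ε i ω a) v⟫} ≤
      ENNReal.ofReal (Real.exp (-s ^ 2 / (2 * c))) := by
  simp only [inner_toEuclideanLin, Matrix.of_apply]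
  rw [← ofReal_measureReal]
  exact ENNReal.ofReal_le_ofReal <| (IsSGVec.hasSubgaussianMGF_sum_mul hindep hsg
    ((vnorm_ofLp u).trans hu) (sum_sq_eq_one_of_norm_eq_one hv)).measure_ge_le hs

theorem measure_two_mul_le_opnorm_le (hindep : iIndepFun ε μ)
    (hsg : ∀ i, IsSGVec μ (ε i) c) {s : ℝ} (hs : 0 < s) :
    μ {ω | 2 * s ≤ opnorm (Matrix.of fun a i => ε i ω a)} ≤
      ENNReal.ofReal (9 ^ p * 9 ^ n * Real.exp (-s ^ 2 / (2 * c))) := by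
  set A : Ω → Matrix (Fin p) (Fin n) ℝ := fun ω => Matrix.of fun a i => ε i ω a
  obtain ⟨N, hNs, hNc, hNcard⟩ := exists_sphere_net p
  obtain ⟨M, hMs, hMc, hMcard⟩ := exists_sphere_net n
  have hsub : {ω | 2 * s ≤ opnorm (A ω)} ⊆
      ⋃ q ∈ N ×ˢ M, {ω | s ≤ ⟪q.1, Matrix.toEuclideanLin (A ω) q.2⟫} := by
    intro ω hω
    by_contra hω'
    simp only [Set.mem_iUnion, Set.mem_ofPred_eq, Finset.mem_product, not_exists, not_le] at hω'
    exact hω.not_gt <| opNorm_lt_two_mul_of_isCover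
      (L := LinearMap.toContinuousLinearMap (Matrix.toEuclideanLin (A ω)))
      (hNs.trans sphere_subset_closedBall) hNc hMc hs fun u hu v hv => hω' (u, v) ⟨hu, hv⟩
  have htail : ∀ q ∈ N ×ˢ M, μ {ω | s ≤ ⟪q.1, Matrix.toEuclideanLin (A ω) q.2⟫} ≤
      ENNReal.ofReal (Real.exp (-s ^ 2 / (2 * c))) := fun q hq =>
    measure_le_inner_toEuclideanLin_le hindep hsg
      (mem_sphere_zero_iff_norm.1 (hNs (Finset.mem_product.1 hq).1))
      (mem_sphere_zero_iff_norm.1 (hMs (Finset.mem_product.1 hq).2)) hs.le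
  calc μ {ω | 2 * s ≤ opnorm (A ω)}
      ≤ ∑ q ∈ N ×ˢ M, μ {ω | s ≤ ⟪q.1, Matrix.toEuclideanLin (A ω) q.2⟫} :=
        (measure_mono hsub).trans (measure_biUnion_finset_le _ _)
    _ ≤ (N ×ˢ M).card • ENNReal.ofReal (Real.exp (-s ^ 2 / (2 * c))) :=
        Finset.sum_le_card_nsmul _ _ _ htail
    _ ≤ ENNReal.ofReal (9 ^ p * 9 ^ n * Real.exp (-s ^ 2 / (2 * c))) := by
        rw [nsmul_eq_mul, Finset.card_product, ← ENNReal.ofReal_natCast,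
          ← ENNReal.ofReal_mul (by positivity)]
        refine ENNReal.ofReal_le_ofReal (mul_le_mul_of_nonneg_right ?_ (by positivity))
        exact_mod_cast Nat.mul_le_mul hNcard hMcard

end RandomMatrix

theorem subgaussian_matrix_opnorm_general
    (Ω : Type) [MeasurableSpace Ω] (μ : Measure Ω) [IsProbabilityMeasure μ]
    (p n : ℕ) (σ : ℝ) (hσ : 0 < σ)
    (ε : Fin n → Ω → Fin p → ℝ)
    (hindep : iIndepFun ε μ)
    (hsg : ∀ i, IsSGVec μ (ε i) (σ ^ 2))
    (t : ℝ) (ht : 2 ≤ t) :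
    μ {ω | 4 * t * σ * (Real.sqrt (n : ℝ) + Real.sqrt (p : ℝ)) ≤
        opnorm (Matrix.of fun a i => ε i ω a)} ≤
      ENNReal.ofReal (Real.exp (-((t ^ 2 - 3) * (n : ℝ) / 2))) := by
  rcases Nat.eq_zero_or_pos n with rfl | hn
  · simpa using prob_le_one
  have hs : 0 < 2 * t * σ * (√n + √p) := by
    have : 0 < √(n : ℝ) := Real.sqrt_pos.2 (by exact_mod_cast hn)
    positivity
  rw [show 4 * t * σ * (√n + √p) = 2 * (2 * t * σ * (√n + √p)) by ring]
  exact (measure_two_mul_le_opnorm_le (c := ⟨σ ^ 2, sq_nonneg σ⟩) hindep hsg hs).trans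
    (ENNReal.ofReal_le_ofReal (nine_pow_mul_exp_le n p hσ ht))

/-- **Lemma 6 (operator norm of a matrix with independent sub-Gaussian columns).**
If the columns `ε_i` of `E ∈ ℝ^{p×n}` are independent `SG_p(σ²)` random vectors, then for
every `t ≥ 2`, `P(‖E‖ ≥ 4tσ(√n + √p)) ≤ exp(−(t² − 3)n/2)`. -/
theorem subgaussian_matrix_opnorm
    (Ω : Type) [MeasurableSpace Ω] (μ : Measure Ω) [IsProbabilityMeasure μ]
    (p n : ℕ) (σ : ℝ) (hσ : 0 < σ)
    (ε : Fin n → Ω → Fin p → ℝ)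
    (hmeas : ∀ i, Measurable (ε i))
    (hindep : iIndepFun ε μ)
    (hsg : ∀ i, IsSGVec μ (ε i) (σ ^ 2))
    (t : ℝ) (ht : 2 ≤ t) :
    μ {ω | 4 * t * σ * (Real.sqrt (n : ℝ) + Real.sqrt (p : ℝ)) ≤
        opnorm (Matrix.of fun a i => ε i ω a)} ≤
      ENNReal.ofReal (Real.exp (-((t ^ 2 - 3) * (n : ℝ) / 2))) :=
  subgaussian_matrix_opnorm_general Ω μ p n σ hσ ε hindep hsg t ht
end
end

section
/- Let P ∈ ℝ^{p×n} be a matrix with exactly k distinct columns θ*_1,…,θ*_k ∈ ℝ^p, each appearing at least βn/k times, and let κ be the rank of P with singular values λ_1 ≥ … ≥ λ_κ > 0. For i ∈ [n], let P_{−i} ∈ ℝ^{p×(n−1)} be P with its i-th column removed, with singular values λ_{−i,1} ≥ λ_{−i,2} ≥ …. If βn/k ≥ 2, then for every i ∈ [n]: (a) P_{−i} has rank κ, its leading left singular subspace (the span of left singular vectors corresponding to nonzero singular values) equals that of P, and λ_{−i,κ+1} = 0; and (b) λ_{−i,κ}² ≥ (1 − k/(βn)) λ_κ². -/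
open Matrix MeasureTheory ProbabilityTheory
open scoped BigOperators ENNReal NNReal

noncomputable section

/-! Every cluster has at least two members, so deleting column `i` keeps a copy of it: the set of
columns, hence their span and the rank, does not change, and a rank-`κ` matrix has vanishing
`(κ+1)`-st singular value. Column `i` itself occurs at least `N = βn/k` times in `P`, so
`⟨x, P_i⟩² ≤ ‖xᵀP‖² / N` and therefore `‖xᵀP_{-i}‖² ≥ (1 - 1/N) ‖xᵀP‖²` for every `x`. A
Courant–Fischer argument (intersect the span of the top `r+1` left singular vectors of `P` with
that of the bottom `p-r` ones of `P_{-i}`) turns this comparison of quadratic forms into the same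
comparison of each singular value. -/

section OrthogonalColumns

variable {ι : Type*} [Fintype ι] [DecidableEq ι]

lemma dotProduct_vecMul_self_of_transpose_mul_self {R : Type*} [CommRing R] {U : Matrix ι ι R}
    (hU : Uᵀ * U = 1) (x : ι → R) : (x ᵥ* U) ⬝ᵥ (x ᵥ* U) = x ⬝ᵥ x := by
  rw [← dotProduct_mulVec, ← vecMul_transpose, vecMul_vecMul, mul_eq_one_comm.mp hU,
    vecMul_one]

lemma vecMul_apply_eq_zero_of_mem_span_cols {R : Type*} [CommRing R] {U : Matrix ι ι R}
    (hU : Uᵀ * U = 1) {s : Set ι} {x : ι → R} (hx : x ∈ Submodule.span R (U.col '' s))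
    {l : ι} (hl : l ∉ s) : (x ᵥ* U) l = 0 := by
  suffices Submodule.span R (U.col '' s) ≤
      LinearMap.ker (LinearMap.proj l ∘ₗ U.vecMulLinear) from this hx
  rw [Submodule.span_le]
  rintro _ ⟨m, hm, rfl⟩
  have hml : m ≠ l := fun h => hl (h ▸ hm)
  simpa [mul_apply, vecMul, dotProduct, one_apply, hml] using congrFun (congrFun hU m) l

lemma finrank_span_cols_image {K : Type*} [Field K] {U : Matrix ι ι K} (hU : Uᵀ * U = 1)
    (s : Finset ι) : Module.finrank K (Submodule.span K (U.col '' s)) = s.card := by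
  have hli : LinearIndependent K (U.col ∘ ((↑) : s → ι)) :=
    (linearIndependent_cols_iff_isUnit.2 (IsUnit.of_mul_eq_one_right Uᵀ hU)).comp _
      Subtype.val_injective
  rw [Set.image_eq_range]
  exact (finrank_span_eq_card hli).trans (by simp)

end OrthogonalColumns

lemma Submodule.exists_mem_inf_ne_zero_of_finrank_lt_add {K V : Type*} [DivisionRing K]
    [AddCommGroup V] [Module K V] [FiniteDimensional K V] (S T : Submodule K V)
    (h : Module.finrank K V < Module.finrank K S + Module.finrank K T) :
    ∃ x ∈ S ⊓ T, x ≠ 0 := by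
  refine (Submodule.ne_bot_iff _).1 fun hbot => ?_
  have hsum := Submodule.finrank_sup_add_finrank_inf_eq S T
  have hsup := Submodule.finrank_le (S ⊔ T)
  rw [hbot, finrank_bot] at hsum
  omega

namespace SVDData

variable {p n : ℕ} {A : Matrix (Fin p) (Fin n) ℝ} (D : SVDData p n A)

lemma mul_transpose_self : A * Aᵀ = D.U * diagonal (fun l : Fin p => D.sv l ^ 2) * D.Uᵀ := by
  set S : Matrix (Fin p) (Fin n) ℝ := of fun i j => if (i : ℕ) = j then D.sv i else 0
  have hdiag : S * Sᵀ = diagonal (fun l : Fin p => D.sv l ^ 2) := by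
    ext a b
    rw [mul_apply, diagonal_apply]
    by_cases hab : a = b
    · subst hab
      rcases lt_or_ge (a : ℕ) n with ha | ha
      · rw [Finset.sum_eq_single ⟨a, ha⟩ (fun j _ hj => by simp [S, Fin.ext_iff] at hj ⊢; grind)
          (by simp)]
        simp [S, sq]
      · simp [S, D.sv_zero a (min_le_right _ _ |>.trans ha)]
    · refine (Finset.sum_eq_zero fun j _ => ?_).trans (if_neg hab).symm
      simp only [S, transpose_apply, of_apply]
      split_ifs <;> simp_all [Fin.ext_iff]
  calc A * Aᵀ = D.U * (S * (D.Vᵀ * D.V) * Sᵀ) * D.Uᵀ := by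
        conv_lhs => rw [D.decomp]
        simp only [transpose_mul, transpose_transpose, Matrix.mul_assoc]
        rfl
    _ = _ := by rw [D.hV, Matrix.mul_one, hdiag]

lemma vecMul_dotProduct_vecMul (x : Fin p → ℝ) :
    (x ᵥ* A) ⬝ᵥ (x ᵥ* A) = ∑ l : Fin p, D.sv l ^ 2 * (x ᵥ* D.U) l ^ 2 := by
  rw [← dotProduct_mulVec, ← mulVec_transpose, mulVec_mulVec, D.mul_transpose_self,
    ← mulVec_mulVec, ← mulVec_mulVec, dotProduct_mulVec, mulVec_transpose]
  simp only [dotProduct, mulVec_diagonal]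
  exact Finset.sum_congr rfl fun l _ => by ring

lemma sv_sq_mul_le_of_mem_span (r : Fin p) {x : Fin p → ℝ}
    (hx : x ∈ Submodule.span ℝ (D.U.col '' Set.Iic r)) :
    D.sv r ^ 2 * (x ⬝ᵥ x) ≤ (x ᵥ* A) ⬝ᵥ (x ᵥ* A) := by
  rw [D.vecMul_dotProduct_vecMul, ← dotProduct_vecMul_self_of_transpose_mul_self D.hU x,
    dotProduct, Finset.mul_sum]
  refine Finset.sum_le_sum fun l _ => ?_
  by_cases hl : l ≤ r
  · rw [← sq]
    gcongr
    · exact D.sv_nonneg _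
    · exact D.sv_anti _ _ hl
  · simp [vecMul_apply_eq_zero_of_mem_span_cols D.hU hx hl]

lemma le_sv_sq_mul_of_mem_span (r : Fin p) {x : Fin p → ℝ}
    (hx : x ∈ Submodule.span ℝ (D.U.col '' Set.Ici r)) :
    (x ᵥ* A) ⬝ᵥ (x ᵥ* A) ≤ D.sv r ^ 2 * (x ⬝ᵥ x) := by
  rw [D.vecMul_dotProduct_vecMul, ← dotProduct_vecMul_self_of_transpose_mul_self D.hU x,
    dotProduct, Finset.mul_sum]
  refine Finset.sum_le_sum fun l _ => ?_
  by_cases hl : r ≤ l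
  · rw [← sq]
    gcongr
    · exact D.sv_nonneg _
    · exact D.sv_anti _ _ hl
  · simp [vecMul_apply_eq_zero_of_mem_span_cols D.hU hx hl]

lemma sv_eq_zero_of_rank_le {r : ℕ} (h : A.rank ≤ r) : D.sv r = 0 := by
  rcases lt_or_ge r p with hr | hr
  · have hker := LinearMap.finrank_range_add_finrank_ker Aᵀ.mulVecLin
    rw [← Matrix.rank, rank_transpose, Module.finrank_fin_fun] at hker
    have hspan := finrank_span_cols_image D.hU (Finset.Iic ⟨r, hr⟩)
    rw [Fin.card_Iic, Fin.val_mk, Finset.coe_Iic] at hspan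
    obtain ⟨x, ⟨hxS, hxK⟩, hx0⟩ :=
      Submodule.exists_mem_inf_ne_zero_of_finrank_lt_add _ (LinearMap.ker Aᵀ.mulVecLin) (by
        rw [Module.finrank_fin_fun, hspan]; omega)
    have hxA : x ᵥ* A = 0 := by simpa [mulVec_transpose] using hxK
    have hle := D.sv_sq_mul_le_of_mem_span ⟨r, hr⟩ hxS
    rw [hxA, zero_dotProduct, Fin.val_mk] at hle
    have hpos : 0 < x ⬝ᵥ x := by simpa using dotProduct_self_star_pos_iff.2 hx0
    exact pow_eq_zero_iff two_ne_zero |>.1 <|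
      le_antisymm (nonpos_of_mul_nonpos_left hle hpos) (sq_nonneg _)
  · exact D.sv_zero r (min_le_left _ _ |>.trans hr)

lemma mul_sv_sq_le_of_forall {m : ℕ} {B : Matrix (Fin p) (Fin m) ℝ} (E : SVDData p m B)
    {α : ℝ} (hα : 0 ≤ α) (h : ∀ x, α * ((x ᵥ* A) ⬝ᵥ (x ᵥ* A)) ≤ (x ᵥ* B) ⬝ᵥ (x ᵥ* B))
    (r : ℕ) : α * D.sv r ^ 2 ≤ E.sv r ^ 2 := by
  rcases lt_or_ge r p with hr | hr
  · have hS := finrank_span_cols_image D.hU (Finset.Iic ⟨r, hr⟩)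
    have hT := finrank_span_cols_image E.hU (Finset.Ici ⟨r, hr⟩)
    rw [Fin.card_Iic, Fin.val_mk, Finset.coe_Iic] at hS
    rw [Fin.card_Ici, Fin.val_mk, Finset.coe_Ici] at hT
    obtain ⟨x, ⟨hxS, hxT⟩, hx0⟩ :=
      Submodule.exists_mem_inf_ne_zero_of_finrank_lt_add
        (Submodule.span ℝ (D.U.col '' Set.Iic ⟨r, hr⟩))
        (Submodule.span ℝ (E.U.col '' Set.Ici ⟨r, hr⟩)) (by
        rw [Module.finrank_fin_fun, hS, hT]; omega)
    have hlow := D.sv_sq_mul_le_of_mem_span ⟨r, hr⟩ hxS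
    have hup := E.le_sv_sq_mul_of_mem_span ⟨r, hr⟩ hxT
    have hpos : 0 < x ⬝ᵥ x := by simpa using dotProduct_self_star_pos_iff.2 hx0
    refine le_of_mul_le_mul_right ?_ hpos
    calc α * D.sv r ^ 2 * (x ⬝ᵥ x) ≤ α * ((x ᵥ* A) ⬝ᵥ (x ᵥ* A)) := by
          rw [mul_assoc]; exact mul_le_mul_of_nonneg_left hlow hα
      _ ≤ (x ᵥ* B) ⬝ᵥ (x ᵥ* B) := h x
      _ ≤ E.sv r ^ 2 * (x ⬝ᵥ x) := hup
  · rw [D.sv_zero r (min_le_left _ _ |>.trans hr)]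
    simpa using sq_nonneg (E.sv r)

end SVDData

lemma one_sub_inv_mul_dotProduct_self_le_succAbove {n : ℕ} (w : Fin (n + 1) → ℝ)
    (i : Fin (n + 1)) {N : ℝ} (hN : 0 < N)
    (hcard : N ≤ (Finset.univ.filter fun j => w j = w i).card) :
    (1 - N⁻¹) * (w ⬝ᵥ w) ≤ (w ∘ i.succAbove) ⬝ᵥ (w ∘ i.succAbove) := by
  have hsplit : w ⬝ᵥ w = w i * w i + (w ∘ i.succAbove) ⬝ᵥ (w ∘ i.succAbove) :=
    Fin.sum_univ_succAbove (fun j => w j * w j) i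
  have hrepeat : N * (w i * w i) ≤ w ⬝ᵥ w :=
    calc N * (w i * w i)
        ≤ (Finset.univ.filter fun j => w j = w i).card * (w i * w i) :=
          mul_le_mul_of_nonneg_right hcard (mul_self_nonneg _)
      _ = ∑ j ∈ Finset.univ.filter (fun j => w j = w i), w j * w j := by
          rw [Finset.sum_congr rfl fun j hj => by rw [(Finset.mem_filter.1 hj).2],
            Finset.sum_const, nsmul_eq_mul]
      _ ≤ w ⬝ᵥ w :=
          Finset.sum_le_sum_of_subset_of_nonneg (Finset.filter_subset _ _)
            fun j _ _ => mul_self_nonneg _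
  have : w i * w i ≤ N⁻¹ * (w ⬝ᵥ w) := by
    rw [inv_mul_eq_div, le_div_iff₀ hN, mul_comm]; exact hrepeat
  linarith

lemma Fin.range_comp_succAbove_of_apply_eq {α : Type*} {n : ℕ} (f : Fin (n + 1) → α)
    {i j : Fin (n + 1)} (hji : j ≠ i) (h : f j = f i) :
    Set.range (f ∘ i.succAbove) = Set.range f := by
  refine (Set.range_comp_subset_range _ _).antisymm ?_
  rintro _ ⟨l, rfl⟩
  by_cases hl : l = i
  · obtain ⟨t, ht⟩ := Fin.exists_succAbove_eq hji
    exact ⟨t, by simp [ht, h, hl]⟩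
  · obtain ⟨t, ht⟩ := Fin.exists_succAbove_eq hl
    exact ⟨t, by simp [ht]⟩

lemma betaMin_mul_div_eq_iInf {m k : ℕ} (z : Fin m → Fin k) (hm : m ≠ 0) (hk : k ≠ 0) :
    betaMin m k z * m / k = ⨅ a, ((Finset.univ.filter fun j => z j = a).card : ℝ) := by
  unfold betaMin
  field_simp

theorem signal_matrix_leave_one_out_general
    (p n k : ℕ) (z : Fin (n + 1) → Fin k) (θ : Fin k → Fin p → ℝ)
    (Pm : Matrix (Fin p) (Fin (n + 1)) ℝ) (hP : ∀ a j, Pm a j = θ (z j) a)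
    (hβ : 2 ≤ betaMin (n + 1) k z * ((n : ℝ) + 1) / (k : ℝ))
    (κ : ℕ) (hrank : Pm.rank = κ)
    (DP : SVDData p (n + 1) Pm)
    (i : Fin (n + 1)) (DPi : SVDData p n (Pm.submatrix id i.succAbove)) :
    (Pm.submatrix id i.succAbove).rank = κ ∧
    Submodule.span ℝ
        (Set.range fun j : Fin n => fun a : Fin p => Pm.submatrix id i.succAbove a j) =
      Submodule.span ℝ (Set.range fun j : Fin (n + 1) => fun a : Fin p => Pm a j) ∧
    DPi.sv κ = 0 ∧
    (1 - (k : ℝ) / (betaMin (n + 1) k z * ((n : ℝ) + 1))) * DP.sv (κ - 1) ^ 2 ≤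
      DPi.sv (κ - 1) ^ 2 := by
  set N := ⨅ a, ((Finset.univ.filter fun j => z j = a).card : ℝ)
  have hN : betaMin (n + 1) k z * ((n : ℝ) + 1) / k = N := by
    exact_mod_cast betaMin_mul_div_eq_iInf z n.succ_ne_zero (z i).pos.ne'
  have hN_le (a : Fin k) : N ≤ (Finset.univ.filter fun j => z j = a).card :=
    ciInf_le (Set.finite_range _).bddBelow a
  have hN2 : 2 ≤ N := hN ▸ hβ
  obtain ⟨j, hj, hji⟩ : ∃ j, z j = z i ∧ j ≠ i := by
    have : 1 < (Finset.univ.filter fun j => z j = z i).card := by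
      exact_mod_cast hN2.trans (hN_le (z i))
    obtain ⟨j, hj, hji⟩ := Finset.exists_mem_ne this i
    exact ⟨j, (Finset.mem_filter.1 hj).2, hji⟩
  have hcols : Set.range (Pm.submatrix id i.succAbove).col = Set.range Pm.col :=
    Fin.range_comp_succAbove_of_apply_eq Pm.col hji (by ext a; simp [hP, hj])
  have hrank' : (Pm.submatrix id i.succAbove).rank = κ := by
    rw [rank_eq_finrank_span_cols, hcols, ← rank_eq_finrank_span_cols, hrank]
  refine ⟨hrank', congrArg _ hcols, DPi.sv_eq_zero_of_rank_le hrank'.le, ?_⟩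
  rw [← inv_div, hN]
  refine DP.mul_sv_sq_le_of_forall DPi ?_ (fun x => ?_) _
  · have : N⁻¹ ≤ 1 := inv_le_one_of_one_le₀ (by linarith)
    linarith
  · refine one_sub_inv_mul_dotProduct_self_le_succAbove (x ᵥ* Pm) i (by linarith)
      ((hN_le (z i)).trans (Nat.cast_le.2 (Finset.card_le_card fun l hl => ?_)))
    have hl : z l = z i := (Finset.mem_filter.1 hl).2
    simp [vecMul, dotProduct, hP, hl]

/-- **Lemma 8 (leave-one-out stability of the signal matrix).**
`P ∈ ℝ^{p×(n+1)}` has exactly `k` distinct columns `θ*_1,…,θ*_k`, each appearing at least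
`βn/k` times, `rank P = κ ∈ [k]`.  If `βn/k ≥ 2` then for every `i`: (a) `P_{−i}` has
rank `κ`, its column span (= leading left singular subspace) equals that of `P`, and
`λ_{−i,κ+1} = 0`; (b) `λ_{−i,κ}² ≥ (1 − k/(βn)) λ_κ²`. -/
theorem signal_matrix_leave_one_out
    (p n k : ℕ) (z : Fin (n + 1) → Fin k) (θ : Fin k → Fin p → ℝ)
    (hθ : Function.Injective θ)
    (Pm : Matrix (Fin p) (Fin (n + 1)) ℝ) (hP : ∀ a j, Pm a j = θ (z j) a)
    (hβ : 2 ≤ betaMin (n + 1) k z * ((n : ℝ) + 1) / (k : ℝ))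
    (κ : ℕ) (hκ0 : 0 < κ) (hκk : κ ≤ k) (hrank : Pm.rank = κ)
    (DP : SVDData p (n + 1) Pm)
    (i : Fin (n + 1)) (DPi : SVDData p n (Pm.submatrix id i.succAbove)) :
    (Pm.submatrix id i.succAbove).rank = κ ∧
    Submodule.span ℝ
        (Set.range fun j : Fin n => fun a : Fin p => Pm.submatrix id i.succAbove a j) =
      Submodule.span ℝ (Set.range fun j : Fin (n + 1) => fun a : Fin p => Pm a j) ∧
    DPi.sv κ = 0 ∧
    (1 - (k : ℝ) / (betaMin (n + 1) k z * ((n : ℝ) + 1))) * DP.sv (κ - 1) ^ 2 ≤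
      DPi.sv (κ - 1) ^ 2 :=
  signal_matrix_leave_one_out_general p n k z θ Pm hP hβ κ hrank DP i DPi
end
end
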